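/- arXiv:2605.19914 — 13 statements merged into one kernel-verified Lean document; each statement's English description precedes it below -/
import Mathlib

section
/- Let T > 0, m₀ ∈ ℝ, L_m ∈ (0,1), let b : ℝ × ℝ × [0,T] → ℝ be continuous and satisfy |b(m,y,t) − b(m',y,t)| ≤ L_m|m − m'| for all m, m', y, t, let l : [0,T] → ℝ be continuous, and let x : [0,T] → ℝ be continuous. Then the map on C([0,T]) sending w to the path t ↦ x(t) − sup_{0≤s≤t}(x(s) − b(M(w)(s), l(s), s))⁺ is an L_m-Lipschitz map in the supremum norm, and consequently there exists a unique continuous w : [0,T] → ℝ such that w(t) = x(t) − sup_{0≤s≤t}(x(s) − b(M(w)(s), l(s), s))⁺ for every t ∈ [0,T]. -/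
/-!
Since `a ↦ a⁺`, running minima and running suprema are all `1`-Lipschitz for the supremum norm,
the only contraction in `w ↦ x - sup (x - b(M(w), l, ·))⁺` comes from `b`, which is `L_m`-Lipschitz
in its first variable. Running extrema of continuous paths on `[0,T]` are continuous, so the map
sends `C([0,T])` to itself, and Banach's fixed point theorem gives the unique fixed point.
-/

open Set

/-- Running minimum of a continuous path `w` on `[0,T]`, started at level `m₀`:
`M(w)(t) = min(m₀, inf_{0 ≤ s ≤ t} w(s))`. -/
noncomputable def runMin (T m₀ : ℝ) (w : C(Set.Icc (0:ℝ) T, ℝ))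
    (t : Set.Icc (0:ℝ) T) : ℝ :=
  min m₀ (sInf (w '' Set.Iic t))

/-- The Skorokhod-type map `w ↦ (t ↦ x(t) − sup_{0≤s≤t} (x(s) − b(M(w)(s), l(s), s))⁺)`. -/
noncomputable def skMap (T m₀ : ℝ) (b : ℝ → ℝ → Set.Icc (0:ℝ) T → ℝ)
    (l x : C(Set.Icc (0:ℝ) T, ℝ)) (w : C(Set.Icc (0:ℝ) T, ℝ))
    (t : Set.Icc (0:ℝ) T) : ℝ :=
  x t - sSup ((fun s => max (x s - b (runMin T m₀ w s) (l s) s) 0) '' Set.Iic t)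

section RealExtrema

variable {α : Type*} {f g : α → ℝ} {S : Set α} {c : ℝ}

theorem csSup_image_le_csSup_image_add (hS : S.Nonempty) (hg : BddAbove (g '' S))
    (h : ∀ s ∈ S, f s ≤ g s + c) : sSup (f '' S) ≤ sSup (g '' S) + c :=
  csSup_le (hS.image f) <| forall_mem_image.2 fun s hs =>
    (h s hs).trans (add_le_add_left (le_csSup hg (mem_image_of_mem g hs)) c)

theorem csInf_image_le_csInf_image_add (hS : S.Nonempty) (hf : BddBelow (f '' S))
    (h : ∀ s ∈ S, f s ≤ g s + c) : sInf (f '' S) ≤ sInf (g '' S) + c :=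
  sub_le_iff_le_add.1 <| le_csInf (hS.image g) <| forall_mem_image.2 fun s hs => by
    linarith [h s hs, csInf_le hf (mem_image_of_mem f hs)]

theorem abs_csSup_image_sub_csSup_image_le (hS : S.Nonempty) (hf : BddAbove (f '' S))
    (hg : BddAbove (g '' S)) (h : ∀ s ∈ S, |f s - g s| ≤ c) :
    |sSup (f '' S) - sSup (g '' S)| ≤ c := by
  rw [abs_sub_le_iff, sub_le_iff_le_add', sub_le_iff_le_add']
  exact ⟨csSup_image_le_csSup_image_add hS hg fun s hs =>
      sub_le_iff_le_add'.1 (abs_sub_le_iff.1 (h s hs)).1,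
    csSup_image_le_csSup_image_add hS hf fun s hs =>
      sub_le_iff_le_add'.1 (abs_sub_le_iff.1 (h s hs)).2⟩

theorem abs_csInf_image_sub_csInf_image_le (hS : S.Nonempty) (hf : BddBelow (f '' S))
    (hg : BddBelow (g '' S)) (h : ∀ s ∈ S, |f s - g s| ≤ c) :
    |sInf (f '' S) - sInf (g '' S)| ≤ c := by
  rw [abs_sub_le_iff, sub_le_iff_le_add', sub_le_iff_le_add']
  exact ⟨csInf_image_le_csInf_image_add hS hf fun s hs =>
      sub_le_iff_le_add'.1 (abs_sub_le_iff.1 (h s hs)).1,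
    csInf_image_le_csInf_image_add hS hg fun s hs =>
      sub_le_iff_le_add'.1 (abs_sub_le_iff.1 (h s hs)).2⟩

end RealExtrema

theorem image_Iic_eq_image_min {α : Type*} [LinearOrder α] (f : α → ℝ) (t : α) :
    f '' Iic t = (fun s => f (min s t)) '' univ := by
  ext y
  constructor
  · rintro ⟨s, hs, rfl⟩
    exact ⟨s, trivial, congrArg f (min_eq_left hs)⟩
  · rintro ⟨s, -, rfl⟩
    exact ⟨min s t, min_le_right s t, rfl⟩

section RunningExtrema

variable {α : Type*} [TopologicalSpace α] [LinearOrder α] [OrderClosedTopology α]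
  [CompactSpace α] {f : α → ℝ}

theorem Continuous.sSup_image_Iic (hf : Continuous f) :
    Continuous fun t => sSup (f '' Iic t) := by
  simp only [image_Iic_eq_image_min]
  exact isCompact_univ.continuous_sSup (f := fun t s => f (min s t)) (by fun_prop)

theorem Continuous.sInf_image_Iic (hf : Continuous f) :
    Continuous fun t => sInf (f '' Iic t) := by
  simp only [image_Iic_eq_image_min]
  exact isCompact_univ.continuous_sInf (f := fun t s => f (min s t)) (by fun_prop)

end RunningExtrema

section Skorokhod

variable {T m₀ Lm : ℝ} {b : ℝ → ℝ → Icc (0:ℝ) T → ℝ} {l x : C(Icc (0:ℝ) T, ℝ)}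

theorem continuous_runMin (w : C(Icc (0:ℝ) T, ℝ)) : Continuous (runMin T m₀ w) :=
  continuous_const.min w.continuous.sInf_image_Iic

theorem abs_runMin_sub_runMin_le (w w' : C(Icc (0:ℝ) T, ℝ)) (t : Icc (0:ℝ) T) :
    |runMin T m₀ w t - runMin T m₀ w' t| ≤ ‖w - w'‖ := by
  have hinf : |sInf (w '' Iic t) - sInf (w' '' Iic t)| ≤ ‖w - w'‖ :=
    abs_csInf_image_sub_csInf_image_le nonempty_Iic
      ((isCompact_range w.continuous).bddBelow.mono (image_subset_range _ _))
      ((isCompact_range w'.continuous).bddBelow.mono (image_subset_range _ _))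
      fun s _ => by simpa [dist_eq_norm] using w.dist_apply_le_dist (g := w') s
  calc |runMin T m₀ w t - runMin T m₀ w' t|
      ≤ max |m₀ - m₀| |sInf (w '' Iic t) - sInf (w' '' Iic t)| := abs_min_sub_min_le_max _ _ _ _
    _ ≤ ‖w - w'‖ := by simpa using hinf

noncomputable def skIntegrand (T m₀ : ℝ) (b : ℝ → ℝ → Icc (0:ℝ) T → ℝ)
    (l x w : C(Icc (0:ℝ) T, ℝ)) (s : Icc (0:ℝ) T) : ℝ :=
  max (x s - b (runMin T m₀ w s) (l s) s) 0

theorem skMap_eq_sub_sSup (w : C(Icc (0:ℝ) T, ℝ)) (t : Icc (0:ℝ) T) :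
    skMap T m₀ b l x w t = x t - sSup (skIntegrand T m₀ b l x w '' Iic t) :=
  rfl

theorem continuous_skIntegrand
    (hb : Continuous fun p : ℝ × ℝ × Icc (0:ℝ) T => b p.1 p.2.1 p.2.2)
    (w : C(Icc (0:ℝ) T, ℝ)) : Continuous (skIntegrand T m₀ b l x w) :=
  (x.continuous.sub <| hb.comp ((continuous_runMin w).prodMk
    (l.continuous.prodMk continuous_id))).max continuous_const

theorem abs_skIntegrand_sub_skIntegrand_le (hLm : 0 ≤ Lm)
    (hbLip : ∀ (m m' y : ℝ) (t : Icc (0:ℝ) T), |b m y t - b m' y t| ≤ Lm * |m - m'|)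
    (w w' : C(Icc (0:ℝ) T, ℝ)) (s : Icc (0:ℝ) T) :
    |skIntegrand T m₀ b l x w s - skIntegrand T m₀ b l x w' s| ≤ Lm * ‖w - w'‖ :=
  calc |skIntegrand T m₀ b l x w s - skIntegrand T m₀ b l x w' s|
      ≤ max |(x s - b (runMin T m₀ w s) (l s) s) - (x s - b (runMin T m₀ w' s) (l s) s)|
          |(0:ℝ) - 0| := abs_max_sub_max_le_max _ _ _ _
    _ = |b (runMin T m₀ w s) (l s) s - b (runMin T m₀ w' s) (l s) s| := by
      rw [sub_sub_sub_cancel_left, abs_sub_comm, sub_self, abs_zero,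
        max_eq_left (abs_nonneg _)]
    _ ≤ Lm * |runMin T m₀ w s - runMin T m₀ w' s| := hbLip _ _ _ _
    _ ≤ Lm * ‖w - w'‖ := mul_le_mul_of_nonneg_left (abs_runMin_sub_runMin_le w w' s) hLm

theorem continuous_skMap
    (hb : Continuous fun p : ℝ × ℝ × Icc (0:ℝ) T => b p.1 p.2.1 p.2.2)
    (w : C(Icc (0:ℝ) T, ℝ)) : Continuous (skMap T m₀ b l x w) :=
  x.continuous.sub (continuous_skIntegrand hb w).sSup_image_Iic

theorem abs_skMap_sub_skMap_le (hLm : 0 ≤ Lm)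
    (hbLip : ∀ (m m' y : ℝ) (t : Icc (0:ℝ) T), |b m y t - b m' y t| ≤ Lm * |m - m'|)
    (hb : Continuous fun p : ℝ × ℝ × Icc (0:ℝ) T => b p.1 p.2.1 p.2.2)
    (w w' : C(Icc (0:ℝ) T, ℝ)) (t : Icc (0:ℝ) T) :
    |skMap T m₀ b l x w t - skMap T m₀ b l x w' t| ≤ Lm * ‖w - w'‖ := by
  rw [skMap_eq_sub_sSup, skMap_eq_sub_sSup, sub_sub_sub_cancel_left, abs_sub_comm]
  exact abs_csSup_image_sub_csSup_image_le nonempty_Iic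
    ((isCompact_range (continuous_skIntegrand hb w)).bddAbove.mono (image_subset_range _ _))
    ((isCompact_range (continuous_skIntegrand hb w')).bddAbove.mono (image_subset_range _ _))
    fun s _ => abs_skIntegrand_sub_skIntegrand_le hLm hbLip w w' s

noncomputable def skMapCM (T m₀ : ℝ) (b : ℝ → ℝ → Icc (0:ℝ) T → ℝ) (l x : C(Icc (0:ℝ) T, ℝ))
    (hb : Continuous fun p : ℝ × ℝ × Icc (0:ℝ) T => b p.1 p.2.1 p.2.2)
    (w : C(Icc (0:ℝ) T, ℝ)) : C(Icc (0:ℝ) T, ℝ) :=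
  ⟨skMap T m₀ b l x w, continuous_skMap hb w⟩

theorem lipschitzWith_skMapCM (hLm : 0 ≤ Lm)
    (hbLip : ∀ (m m' y : ℝ) (t : Icc (0:ℝ) T), |b m y t - b m' y t| ≤ Lm * |m - m'|)
    (hb : Continuous fun p : ℝ × ℝ × Icc (0:ℝ) T => b p.1 p.2.1 p.2.2) :
    LipschitzWith ⟨Lm, hLm⟩ (skMapCM T m₀ b l x hb) :=
  LipschitzWith.of_dist_le_mul fun w w' => (ContinuousMap.dist_le (by positivity)).2 fun t => by
    rw [Real.dist_eq, dist_eq_norm]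
    exact abs_skMap_sub_skMap_le hLm hbLip hb w w' t

end Skorokhod

theorem stmt0_general (T m₀ Lm : ℝ) (hLm : Lm ∈ Set.Ioo (0:ℝ) 1)
    (b : ℝ → ℝ → Set.Icc (0:ℝ) T → ℝ)
    (hb : Continuous fun p : ℝ × ℝ × Set.Icc (0:ℝ) T => b p.1 p.2.1 p.2.2)
    (hbLip : ∀ (m m' y : ℝ) (t : Set.Icc (0:ℝ) T),
      |b m y t - b m' y t| ≤ Lm * |m - m'|)
    (l x : C(Set.Icc (0:ℝ) T, ℝ)) :
    (∀ w w' : C(Set.Icc (0:ℝ) T, ℝ), ∀ t : Set.Icc (0:ℝ) T,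
      |skMap T m₀ b l x w t - skMap T m₀ b l x w' t| ≤ Lm * ‖w - w'‖) ∧
    (∃! w : C(Set.Icc (0:ℝ) T, ℝ), ∀ t : Set.Icc (0:ℝ) T,
      w t = skMap T m₀ b l x w t) := by
  refine ⟨abs_skMap_sub_skMap_le hLm.1.le hbLip hb, ?_⟩
  have hF : ContractingWith ⟨Lm, hLm.1.le⟩ (skMapCM T m₀ b l x hb) :=
    ⟨by exact_mod_cast hLm.2, lipschitzWith_skMapCM hLm.1.le hbLip hb⟩
  have : Nonempty C(Icc (0:ℝ) T, ℝ) := ⟨0⟩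
  exact ⟨hF.fixedPoint, fun t => (DFunLike.congr_fun hF.fixedPoint_isFixedPt t).symm,
    fun w hw => hF.fixedPoint_unique (ContinuousMap.ext fun t => (hw t).symm)⟩

/-- The fixed-point map of the Skorokhod problem with running-minimum dependent
boundary is `L_m`-Lipschitz in the supremum norm, and hence admits a unique
continuous fixed point. -/
theorem stmt0 (T m₀ Lm : ℝ) (hT : 0 < T) (hLm : Lm ∈ Set.Ioo (0:ℝ) 1)
    (b : ℝ → ℝ → Set.Icc (0:ℝ) T → ℝ)
    (hb : Continuous fun p : ℝ × ℝ × Set.Icc (0:ℝ) T => b p.1 p.2.1 p.2.2)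
    (hbLip : ∀ (m m' y : ℝ) (t : Set.Icc (0:ℝ) T),
      |b m y t - b m' y t| ≤ Lm * |m - m'|)
    (l x : C(Set.Icc (0:ℝ) T, ℝ)) :
    (∀ w w' : C(Set.Icc (0:ℝ) T, ℝ), ∀ t : Set.Icc (0:ℝ) T,
      |skMap T m₀ b l x w t - skMap T m₀ b l x w' t| ≤ Lm * ‖w - w'‖) ∧
    (∃! w : C(Set.Icc (0:ℝ) T, ℝ), ∀ t : Set.Icc (0:ℝ) T,
      w t = skMap T m₀ b l x w t) :=
  stmt0_general T m₀ Lm hLm b hb hbLip l x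
end

section
/- Let T > 0, m₀ ∈ ℝ, L_m ∈ (0,1), let b : ℝ × ℝ × [0,T] → ℝ be continuous and satisfy |b(m,y,t) − b(m',y,t)| ≤ L_m|m − m'| for all m, m', y, t, and let l : [0,T] → ℝ be continuous. For continuous x, x' : [0,T] → ℝ, let w and w' be the unique continuous solutions of w(t) = x(t) − sup_{0≤s≤t}(x(s) − b(M(w)(s), l(s), s))⁺ and w'(t) = x'(t) − sup_{0≤s≤t}(x'(s) − b(M(w')(s), l(s), s))⁺ respectively. Then ‖w − w'‖_∞ ≤ (2/(1−L_m))·‖x − x'‖_∞. -/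
open Set

lemma aux_ne (T : ℝ) (v : C(Set.Icc (0:ℝ) T, ℝ)) (s : Set.Icc (0:ℝ) T) :
    (v '' Set.Iic s).Nonempty := ⟨v s, s, Set.mem_Iic.mpr le_rfl, rfl⟩

lemma aux_bb (T : ℝ) (v : C(Set.Icc (0:ℝ) T, ℝ)) (s : Set.Icc (0:ℝ) T) :
    BddBelow (v '' Set.Iic s) := by
  refine ⟨-‖v‖, ?_⟩
  rintro a ⟨u, -, rfl⟩
  exact (abs_le.mp (v.norm_coe_le_norm u)).1

lemma aux_abs_sInf (T : ℝ) (v : C(Set.Icc (0:ℝ) T, ℝ)) (s : Set.Icc (0:ℝ) T) :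
    |sInf (v '' Set.Iic s)| ≤ ‖v‖ := by
  rw [abs_le]
  constructor
  · exact le_csInf (aux_ne T v s)
      (by rintro a ⟨u, -, rfl⟩; exact (abs_le.mp (v.norm_coe_le_norm u)).1)
  · exact le_trans (csInf_le (aux_bb T v s) ⟨s, Set.mem_Iic.mpr le_rfl, rfl⟩)
      (abs_le.mp (v.norm_coe_le_norm s)).2

lemma aux_sInf_diff (T : ℝ) (v v' : C(Set.Icc (0:ℝ) T, ℝ)) (s : Set.Icc (0:ℝ) T) :
    |sInf (v '' Set.Iic s) - sInf (v' '' Set.Iic s)| ≤ ‖v - v'‖ := by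
  have hpt : ∀ u : Set.Icc (0:ℝ) T, |v u - v' u| ≤ ‖v - v'‖ := fun u => by
    simpa [ContinuousMap.sub_apply] using (v - v').norm_coe_le_norm u
  rw [abs_sub_le_iff]
  constructor
  · have hkey : sInf (v '' Set.Iic s) - ‖v - v'‖ ≤ sInf (v' '' Set.Iic s) := by
      refine le_csInf (aux_ne T v' s) ?_
      rintro a ⟨u, hu, rfl⟩
      have := csInf_le (aux_bb T v s) ⟨u, hu, rfl⟩
      have h2 := (abs_le.mp (hpt u)).2
      linarith
    linarith
  · have hkey : sInf (v' '' Set.Iic s) - ‖v - v'‖ ≤ sInf (v '' Set.Iic s) := by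
      refine le_csInf (aux_ne T v s) ?_
      rintro a ⟨u, hu, rfl⟩
      have := csInf_le (aux_bb T v' s) ⟨u, hu, rfl⟩
      have h2 := (abs_le.mp (hpt u)).1
      linarith
    linarith

lemma aux_runMin_diff (T m₀ : ℝ) (v v' : C(Set.Icc (0:ℝ) T, ℝ)) (s : Set.Icc (0:ℝ) T) :
    |runMin T m₀ v s - runMin T m₀ v' s| ≤ ‖v - v'‖ := by
  have h := abs_min_sub_min_le_max m₀ (sInf (v '' Set.Iic s)) m₀ (sInf (v' '' Set.Iic s))
  simp only [sub_self, abs_zero] at h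
  refine le_trans h (max_le ?_ (aux_sInf_diff T v v' s))
  positivity

lemma aux_abs_runMin (T m₀ : ℝ) (v : C(Set.Icc (0:ℝ) T, ℝ)) (s : Set.Icc (0:ℝ) T) :
    |runMin T m₀ v s| ≤ |m₀| + ‖v‖ := by
  have h := aux_abs_sInf T v s
  have := abs_min_le_max_abs_abs (a := m₀) (b := sInf (v '' Set.Iic s))
  have hn : (0:ℝ) ≤ ‖v‖ := norm_nonneg _
  have hm : (0:ℝ) ≤ |m₀| := abs_nonneg _
  calc |runMin T m₀ v s| ≤ max |m₀| |sInf (v '' Set.Iic s)| := this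
    _ ≤ |m₀| + ‖v‖ := max_le (by linarith) (by linarith)

lemma aux_sSup_diff {c : ℝ} {T : ℝ} (f g : Set.Icc (0:ℝ) T → ℝ) (t : Set.Icc (0:ℝ) T)
    (hf : BddAbove (f '' Set.Iic t)) (hg : BddAbove (g '' Set.Iic t))
    (h : ∀ u ∈ Set.Iic t, |f u - g u| ≤ c) :
    |sSup (f '' Set.Iic t) - sSup (g '' Set.Iic t)| ≤ c := by
  have hne : (Set.Iic t).Nonempty := ⟨t, Set.mem_Iic.mpr le_rfl⟩
  rw [abs_sub_le_iff]
  constructor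
  · rw [sub_le_iff_le_add]
    refine csSup_le (hne.image f) ?_
    rintro a ⟨u, hu, rfl⟩
    have h1 := le_csSup hg ⟨u, hu, rfl⟩
    have h2 := (abs_le.mp (h u hu)).2
    linarith
  · rw [sub_le_iff_le_add]
    refine csSup_le (hne.image g) ?_
    rintro a ⟨u, hu, rfl⟩
    have h1 := le_csSup hf ⟨u, hu, rfl⟩
    have h2 := (abs_le.mp (h u hu)).1
    linarith

/-- Stability of the solution of the reflection fixed-point problem with respect
to the driving path: `‖w − w'‖ ≤ (2/(1−L_m))·‖x − x'‖`. -/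
theorem stmt1 (T m₀ Lm : ℝ) (hT : 0 < T) (hLm : Lm ∈ Set.Ioo (0:ℝ) 1)
    (b : ℝ → ℝ → Set.Icc (0:ℝ) T → ℝ)
    (hb : Continuous fun p : ℝ × ℝ × Set.Icc (0:ℝ) T => b p.1 p.2.1 p.2.2)
    (hbLip : ∀ (m m' y : ℝ) (t : Set.Icc (0:ℝ) T),
      |b m y t - b m' y t| ≤ Lm * |m - m'|)
    (x x' w w' : C(Set.Icc (0:ℝ) T, ℝ)) (l : C(Set.Icc (0:ℝ) T, ℝ))
    (hw : ∀ t : Set.Icc (0:ℝ) T, w t = skMap T m₀ b l x w t)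
    (hw' : ∀ t : Set.Icc (0:ℝ) T, w' t = skMap T m₀ b l x' w' t) :
    ‖w - w'‖ ≤ (2 / (1 - Lm)) * ‖x - x'‖ := by
  obtain ⟨hLm0, hLm1⟩ := hLm
  set E := ‖x - x'‖ with hE
  set D := ‖w - w'‖ with hD
  -- the continuous map s ↦ b 0 (l s) s
  set g₀ : C(Set.Icc (0:ℝ) T, ℝ) :=
    ⟨fun s => b 0 (l s) s, hb.comp (continuous_const.prodMk (l.continuous.prodMk continuous_id))⟩
    with hg₀
  have hbabs : ∀ (m y : ℝ) (s : Set.Icc (0:ℝ) T), |b m y s| ≤ |b 0 y s| + Lm * |m| := by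
    intro m y s
    have h := hbLip m 0 y s
    simp only [sub_zero] at h
    calc |b m y s| = |(b m y s - b 0 y s) + b 0 y s| := by ring_nf
      _ ≤ |b m y s - b 0 y s| + |b 0 y s| := abs_add_le _ _
      _ ≤ |b 0 y s| + Lm * |m| := by linarith
  -- bounded above
  have hBdd : ∀ (xx vv : C(Set.Icc (0:ℝ) T, ℝ)) (t : Set.Icc (0:ℝ) T),
      BddAbove ((fun s => max (xx s - b (runMin T m₀ vv s) (l s) s) 0) '' Set.Iic t) := by
    intro xx vv t
    refine ⟨‖xx‖ + ‖g₀‖ + Lm * (|m₀| + ‖vv‖), ?_⟩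
    rintro a ⟨u, -, rfl⟩
    have h1 : |xx u| ≤ ‖xx‖ := xx.norm_coe_le_norm u
    have h2 : |b (runMin T m₀ vv u) (l u) u| ≤ |b 0 (l u) u| + Lm * |runMin T m₀ vv u| :=
      hbabs _ _ _
    have h3 : |b 0 (l u) u| ≤ ‖g₀‖ := g₀.norm_coe_le_norm u
    have h4 : |runMin T m₀ vv u| ≤ |m₀| + ‖vv‖ := aux_abs_runMin T m₀ vv u
    have h5 : Lm * |runMin T m₀ vv u| ≤ Lm * (|m₀| + ‖vv‖) :=
      mul_le_mul_of_nonneg_left h4 hLm0.le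
    refine max_le ?_ ?_
    · linarith [(abs_le.mp h1).2, neg_le_abs (b (runMin T m₀ vv u) (l u) u), h2, h3, h5]
    · have hv : (0:ℝ) ≤ ‖vv‖ := norm_nonneg _
      have hm : (0:ℝ) ≤ |m₀| := abs_nonneg _
      nlinarith [norm_nonneg xx, norm_nonneg g₀]
  -- pointwise key estimate
  have key : ∀ t : Set.Icc (0:ℝ) T, |w t - w' t| ≤ 2 * E + Lm * D := by
    intro t
    rw [hw t, hw' t]
    unfold skMap
    have hxt : |x t - x' t| ≤ E := by
      simpa [ContinuousMap.sub_apply] using (x - x').norm_coe_le_norm t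
    have hS : |sSup ((fun s => max (x s - b (runMin T m₀ w s) (l s) s) 0) '' Set.Iic t)
        - sSup ((fun s => max (x' s - b (runMin T m₀ w' s) (l s) s) 0) '' Set.Iic t)|
        ≤ E + Lm * D := by
      refine aux_sSup_diff _ _ t (hBdd x w t) (hBdd x' w' t) ?_
      intro u _
      have h1 : |(x u - b (runMin T m₀ w u) (l u) u) - (x' u - b (runMin T m₀ w' u) (l u) u)|
          ≤ E + Lm * D := by
        have hx : |x u - x' u| ≤ E := by
          simpa [ContinuousMap.sub_apply] using (x - x').norm_coe_le_norm u
        have hbd : |b (runMin T m₀ w u) (l u) u - b (runMin T m₀ w' u) (l u) u|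
            ≤ Lm * |runMin T m₀ w u - runMin T m₀ w' u| := hbLip _ _ _ _
        have hrm : |runMin T m₀ w u - runMin T m₀ w' u| ≤ D := aux_runMin_diff T m₀ w w' u
        have hrm' : Lm * |runMin T m₀ w u - runMin T m₀ w' u| ≤ Lm * D :=
          mul_le_mul_of_nonneg_left hrm hLm0.le
        calc |(x u - b (runMin T m₀ w u) (l u) u) - (x' u - b (runMin T m₀ w' u) (l u) u)|
            = |(x u - x' u) - (b (runMin T m₀ w u) (l u) u - b (runMin T m₀ w' u) (l u) u)| := by
              ring_nf
          _ ≤ |x u - x' u| + |b (runMin T m₀ w u) (l u) u - b (runMin T m₀ w' u) (l u) u| :=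
              abs_sub _ _
          _ ≤ E + Lm * D := by linarith
      exact le_trans (abs_max_sub_max_le_abs _ _ _) h1
    calc |(x t - _) - (x' t - _)| ≤ |x t - x' t| + _ := by
          rw [show (x t - sSup ((fun s => max (x s - b (runMin T m₀ w s) (l s) s) 0) '' Set.Iic t))
            - (x' t - sSup ((fun s => max (x' s - b (runMin T m₀ w' s) (l s) s) 0) '' Set.Iic t))
            = (x t - x' t) - (sSup ((fun s => max (x s - b (runMin T m₀ w s) (l s) s) 0) '' Set.Iic t)
              - sSup ((fun s => max (x' s - b (runMin T m₀ w' s) (l s) s) 0) '' Set.Iic t)) by ring]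
          exact abs_sub _ _
      _ ≤ 2 * E + Lm * D := by linarith
  -- conclude
  have hDkey : D ≤ 2 * E + Lm * D := by
    have hnn : (0:ℝ) ≤ 2 * E + Lm * D := by positivity
    rw [hD]
    refine (ContinuousMap.norm_le _ hnn).mpr ?_
    intro t
    simpa [ContinuousMap.sub_apply, Real.norm_eq_abs] using key t
  have h1Lm : (0:ℝ) < 1 - Lm := by linarith
  rw [div_mul_eq_mul_div, le_div_iff₀ h1Lm]
  nlinarith
end

section
/- Let α < 0 < β be reals. Then for every b ∈ ℝ the denominator βe^{−αb} − αe^{−βb} is strictly positive, the function φ(b) = (β²e^{−αb} − α²e^{−βb})/(βe^{−αb} − αe^{−βb}) is strictly increasing on ℝ, and α < φ(b) < β for every b ∈ ℝ. Consequently, for any ρ ∈ (0,1), λ₄ > 0 and any b ∈ ℝ, the number F = −(1−ρ)·(λ₄²e^{−λ₃b} − λ₃²e^{−λ₄b})/(λ₄e^{−λ₃b} − λ₃e^{−λ₄b}) with λ₃ < 0 < λ₄ satisfies F + (1−ρ)λ₄ > 0. -/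
/-- For `α < 0 < β`, the building block
`φ(b) = (β²e^{−αb} − α²e^{−βb})/(βe^{−αb} − αe^{−βb})` of the function `G`. -/
noncomputable def phiRatio (α β b : ℝ) : ℝ :=
  (β ^ 2 * Real.exp (-α * b) - α ^ 2 * Real.exp (-β * b)) /
    (β * Real.exp (-α * b) - α * Real.exp (-β * b))

lemma phi_denom_pos (α β : ℝ) (hα : α < 0) (hβ : 0 < β) (b : ℝ) :
    0 < β * Real.exp (-α * b) - α * Real.exp (-β * b) := by
  have h1 : 0 < β * Real.exp (-α * b) := by positivity
  have h2 : α * Real.exp (-β * b) < 0 :=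
    mul_neg_of_neg_of_pos hα (Real.exp_pos _)
  linarith

lemma phi_denom2_pos (α β : ℝ) (hα : α < 0) (hβ : 0 < β) (b : ℝ) :
    0 < β * Real.exp ((β - α) * b) - α := by
  have := Real.exp_pos ((β - α) * b)
  nlinarith

lemma phi_eq (α β : ℝ) (hα : α < 0) (hβ : 0 < β) (b : ℝ) :
    phiRatio α β b = β + α * (β - α) / (β * Real.exp ((β - α) * b) - α) := by
  have ht : Real.exp (-α * b) = Real.exp ((β - α) * b) * Real.exp (-β * b) := by
    rw [← Real.exp_add]; ring_nf
  have hD : (0:ℝ) < β * Real.exp ((β - α) * b) - α := phi_denom2_pos α β hα hβ b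
  have hE : (0:ℝ) < Real.exp (-β * b) := Real.exp_pos _
  unfold phiRatio
  rw [ht]
  rw [div_eq_iff (by nlinarith)]
  field_simp
  ring

lemma phi_mono (α β : ℝ) (hα : α < 0) (hβ : 0 < β) : StrictMono (phiRatio α β) := by
  intro b1 b2 hb
  rw [phi_eq α β hα hβ, phi_eq α β hα hβ]
  have hD1 : (0:ℝ) < β * Real.exp ((β - α) * b1) - α := phi_denom2_pos α β hα hβ b1
  have hD2 : (0:ℝ) < β * Real.exp ((β - α) * b2) - α := phi_denom2_pos α β hα hβ b2
  have ht : Real.exp ((β - α) * b1) < Real.exp ((β - α) * b2) := by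
    apply Real.exp_lt_exp.2
    have : (0:ℝ) < β - α := by linarith
    nlinarith
  have hlt : β * Real.exp ((β - α) * b1) - α < β * Real.exp ((β - α) * b2) - α := by
    nlinarith
  have hc : α * (β - α) < 0 := mul_neg_of_neg_of_pos hα (by linarith)
  have key : α * (β - α) / (β * Real.exp ((β - α) * b1) - α)
      < α * (β - α) / (β * Real.exp ((β - α) * b2) - α) := by
    rw [div_lt_div_iff₀ hD1 hD2]
    nlinarith [mul_lt_mul_of_neg_left hlt hc]
  linarith

lemma phi_bounds (α β : ℝ) (hα : α < 0) (hβ : 0 < β) (b : ℝ) :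
    α < phiRatio α β b ∧ phiRatio α β b < β := by
  rw [phi_eq α β hα hβ]
  have hD : (0:ℝ) < β * Real.exp ((β - α) * b) - α := phi_denom2_pos α β hα hβ b
  have hE : (0:ℝ) < Real.exp ((β - α) * b) := Real.exp_pos _
  constructor
  · have h1 : α - β < α * (β - α) / (β * Real.exp ((β - α) * b) - α) := by
      rw [lt_div_iff₀ hD]
      nlinarith [mul_pos (show (0:ℝ) < β - α by linarith) (mul_pos hβ hE)]
    linarith
  · have : α * (β - α) / (β * Real.exp ((β - α) * b) - α) < 0 :=
      div_neg_of_neg_of_pos (mul_neg_of_neg_of_pos hα (by linarith)) hD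
    linarith

/-- For `α < 0 < β` the denominator `βe^{−αb} − αe^{−βb}` is positive, the ratio
`φ` is strictly increasing, `α < φ(b) < β`, and consequently
`F + (1−ρ)λ₄ > 0` for `F = −(1−ρ)·φ_{λ₃,λ₄}(b)` with `λ₃ < 0 < λ₄`. -/
theorem stmt5 (α β : ℝ) (hα : α < 0) (hβ : 0 < β) :
    (∀ b : ℝ, 0 < β * Real.exp (-α * b) - α * Real.exp (-β * b)) ∧
    StrictMono (phiRatio α β) ∧
    (∀ b : ℝ, α < phiRatio α β b ∧ phiRatio α β b < β) ∧
    (∀ ρ l3 l4 b : ℝ, ρ ∈ Set.Ioo (0:ℝ) 1 → l3 < 0 → 0 < l4 →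
      0 < -(1 - ρ) * phiRatio l3 l4 b + (1 - ρ) * l4) := by
  refine ⟨phi_denom_pos α β hα hβ, phi_mono α β hα hβ, phi_bounds α β hα hβ, ?_⟩
  intro ρ l3 l4 b hρ h3 h4
  have hlt := (phi_bounds l3 l4 h3 h4 b).2
  have h1ρ : 0 < 1 - ρ := by linarith [hρ.2]
  nlinarith
end

section
/- Let t > 0. The function h(x) = (1/x)·ln((x + t)/(x − t)) is strictly decreasing on (t, ∞). Consequently, for μ, σ, δ, γ > 0, setting λ₁ = (−μ − √(μ² + 2σ²δ))/σ², λ₂ = (−μ + √(μ² + 2σ²δ))/σ², λ₃ = (−μ − √(μ² + 2σ²(δ+γ)))/σ², λ₄ = (−μ + √(μ² + 2σ²(δ+γ)))/σ², one has ln((λ₃/λ₄)²)/(λ₄ − λ₃) < ln((λ₁/λ₂)²)/(λ₂ − λ₁); i.e., the localization interval for the root of G is nonempty. -/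
/-!
On `(t, ∞)` both `1 / x` and `log ((x + t) / (x - t)) = log (1 + 2t / (x - t))` are positive and
strictly decreasing, hence so is their product `h`. Writing `s = √(μ² + 2σ²δ)`, one has
`λ₂ - λ₁ = 2s / σ²` and `(λ₁ / λ₂)² = ((s + μ) / (s - μ))²`, so the left endpoint
`ln((λ₁/λ₂)²)/(λ₂ − λ₁)` equals `σ² h(s)` with `t = μ`; likewise the other one is `σ² h(r)` with
`r = √(μ² + 2σ²(δ + γ)) > s`, and the comparison is the monotonicity of `h`.
-/

open Real Set

lemma strictAntiOn_add_div_sub {t : ℝ} (ht : 0 < t) :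
    StrictAntiOn (fun x : ℝ => (x + t) / (x - t)) (Ioi t) := by
  intro x (hx : t < x) y (hy : t < y) hxy
  rw [div_lt_div_iff₀ (by linarith) (by linarith)]
  nlinarith

lemma strictAntiOn_log_add_div_sub {t : ℝ} (ht : 0 < t) :
    StrictAntiOn (fun x : ℝ => log ((x + t) / (x - t))) (Ioi t) := by
  intro x (hx : t < x) y (hy : t < y) hxy
  exact log_lt_log (div_pos (by linarith) (by linarith)) (strictAntiOn_add_div_sub ht hx hy hxy)

lemma log_add_div_sub_pos {t x : ℝ} (ht : 0 < t) (hx : t < x) :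
    0 < log ((x + t) / (x - t)) :=
  log_pos <| (one_lt_div (by linarith)).2 (by linarith)

lemma strictAntiOn_inv_mul_log_add_div_sub {t : ℝ} (ht : 0 < t) :
    StrictAntiOn (fun x : ℝ => (1 / x) * log ((x + t) / (x - t))) (Ioi t) := by
  intro x (hx : t < x) y (hy : t < y) hxy
  have hinv : 1 / y < 1 / x := one_div_lt_one_div_of_lt (by linarith) hxy
  have hlog := strictAntiOn_log_add_div_sub ht hx hy hxy
  exact mul_lt_mul'' hinv hlog (one_div_pos.2 (by linarith)).le (log_add_div_sub_pos ht hy).le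

lemma log_sq_div_roots_div_sub_roots {μ s c : ℝ} (hc : c ≠ 0) (hs : s ≠ 0) (hsμ : s - μ ≠ 0) :
    log (((-μ - s) / c / ((-μ + s) / c)) ^ 2) / ((-μ + s) / c - (-μ - s) / c) =
      c * ((1 / s) * log ((s + μ) / (s - μ))) := by
  have hratio : ((-μ - s) / c / ((-μ + s) / c)) ^ 2 = ((s + μ) / (s - μ)) ^ 2 := by
    have : -μ + s ≠ 0 := by rwa [neg_add_eq_sub]
    field_simp
    ring
  have hdiff : (-μ + s) / c - (-μ - s) / c = 2 * s / c := by ring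
  rw [hratio, hdiff, log_pow]
  field_simp
  ring

lemma lt_sqrt_sq_add {μ a : ℝ} (hμ : 0 ≤ μ) (ha : 0 < a) : μ < √(μ ^ 2 + a) :=
  (lt_sqrt hμ).2 (by linarith)

/-- The function `h(x) = (1/x)·ln((x+t)/(x−t))` is strictly decreasing on
`(t, ∞)`; consequently the localization interval for the root of `G` is
nonempty: `ln((λ₃/λ₄)²)/(λ₄−λ₃) < ln((λ₁/λ₂)²)/(λ₂−λ₁)`. -/
theorem stmt7 (t : ℝ) (ht : 0 < t) :
    StrictAntiOn (fun x : ℝ => (1 / x) * Real.log ((x + t) / (x - t)))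
      (Set.Ioi t) ∧
    (∀ μ σ δ γ l1 l2 l3 l4 : ℝ,
      0 < μ → 0 < σ → 0 < δ → 0 < γ →
      l1 = (-μ - Real.sqrt (μ ^ 2 + 2 * σ ^ 2 * δ)) / σ ^ 2 →
      l2 = (-μ + Real.sqrt (μ ^ 2 + 2 * σ ^ 2 * δ)) / σ ^ 2 →
      l3 = (-μ - Real.sqrt (μ ^ 2 + 2 * σ ^ 2 * (δ + γ))) / σ ^ 2 →
      l4 = (-μ + Real.sqrt (μ ^ 2 + 2 * σ ^ 2 * (δ + γ))) / σ ^ 2 →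
      Real.log ((l3 / l4) ^ 2) / (l4 - l3) <
        Real.log ((l1 / l2) ^ 2) / (l2 - l1)) := by
  refine ⟨strictAntiOn_inv_mul_log_add_div_sub ht, ?_⟩
  rintro μ σ δ γ l1 l2 l3 l4 hμ hσ hδ hγ rfl rfl rfl rfl
  set s := √(μ ^ 2 + 2 * σ ^ 2 * δ)
  set r := √(μ ^ 2 + 2 * σ ^ 2 * (δ + γ))
  have hμs : μ < s := lt_sqrt_sq_add hμ.le (by positivity)
  have hμr : μ < r := lt_sqrt_sq_add hμ.le (by positivity)
  have hsr : s < r := sqrt_lt_sqrt (by positivity) (by linarith [mul_pos (pow_pos hσ 2) hγ])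
  have hσ2 : σ ^ 2 ≠ 0 := by positivity
  rw [log_sq_div_roots_div_sub_roots hσ2 (by linarith) (by linarith),
    log_sq_div_roots_div_sub_roots hσ2 (by linarith) (by linarith)]
  exact mul_lt_mul_of_pos_left (strictAntiOn_inv_mul_log_add_div_sub hμ hμs hμr hsr)
    (by positivity)
end

section
/- Let λ₃ < λ₁ < 0 < λ₂ < λ₄ be reals, ρ ∈ (0,1), q > 0. Then for all m, b ∈ ℝ, with δ = b − m: R₁(m,b)·X₂₂(m,b) − R₂(m,b)·X₁₂(m,b) = q·e^{−qm}·D₁(δ)·D₂(δ)·G(δ), where D₁(δ) = λ₂e^{−λ₁δ} − λ₁e^{−λ₂δ} > 0 and D₂(δ) = λ₄e^{−λ₃δ} − λ₃e^{−λ₄δ} > 0. In particular, R₁(m,b)X₂₂(m,b) = R₂(m,b)X₁₂(m,b) if and only if G(b − m) = 0. -/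
/-- `D(α,β,b) = βe^{−αb} − αe^{−βb}` (denominators `D₁`, `D₂`). -/
noncomputable def Dden (α β b : ℝ) : ℝ :=
  β * Real.exp (-α * b) - α * Real.exp (-β * b)

/-- `N(α,β,b) = β²e^{−αb} − α²e^{−βb}` (numerators `N₁`, `N₂`). -/
noncomputable def Nnum (α β b : ℝ) : ℝ :=
  β ^ 2 * Real.exp (-α * b) - α ^ 2 * Real.exp (-β * b)

/-- `G(b) = ρ·N₁(b)/D₁(b) + (1−ρ)·N₂(b)/D₂(b)`. -/
noncomputable def Gfun (l1 l2 l3 l4 ρ b : ℝ) : ℝ :=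
  ρ * (Nnum l1 l2 b / Dden l1 l2 b) + (1 - ρ) * (Nnum l3 l4 b / Dden l3 l4 b)

/-- `X₁₂(m,b) = λ₁e^{λ₂(m−b)} − λ₂e^{λ₁(m−b)}`. -/
noncomputable def X12 (l1 l2 m b : ℝ) : ℝ :=
  l1 * Real.exp (l2 * (m - b)) - l2 * Real.exp (l1 * (m - b))

/-- `X₂₂(m,b) = λ₄e^{λ₃(m−b)} − λ₃e^{λ₄(m−b)}`. -/
noncomputable def X22 (l3 l4 m b : ℝ) : ℝ :=
  l4 * Real.exp (l3 * (m - b)) - l3 * Real.exp (l4 * (m - b))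

/-- `R₁(m,b) = ρqe^{−qm}(λ₂²e^{λ₁(m−b)} − λ₁²e^{λ₂(m−b)})`. -/
noncomputable def R1 (l1 l2 ρ q m b : ℝ) : ℝ :=
  ρ * q * Real.exp (-q * m) *
    (l2 ^ 2 * Real.exp (l1 * (m - b)) - l1 ^ 2 * Real.exp (l2 * (m - b)))

/-- `R₂(m,b) = (1−ρ)qe^{−qm}(λ₄²e^{λ₃(m−b)} − λ₃²e^{λ₄(m−b)})`. -/
noncomputable def R2 (l3 l4 ρ q m b : ℝ) : ℝ :=
  (1 - ρ) * q * Real.exp (-q * m) *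
    (l4 ^ 2 * Real.exp (l3 * (m - b)) - l3 ^ 2 * Real.exp (l4 * (m - b)))

/-- The key algebraic identity
`R₁X₂₂ − R₂X₁₂ = q·e^{−qm}·D₁(b−m)·D₂(b−m)·G(b−m)`, with `D₁, D₂ > 0`; in
particular `R₁X₂₂ = R₂X₁₂ ↔ G(b−m) = 0`. -/
theorem stmt8 (l1 l2 l3 l4 ρ q : ℝ)
    (h31 : l3 < l1) (h10 : l1 < 0) (h02 : (0:ℝ) < l2) (h24 : l2 < l4)
    (hρ : ρ ∈ Set.Ioo (0:ℝ) 1) (hq : 0 < q) :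
    ∀ m b : ℝ,
      (0 < Dden l1 l2 (b - m)) ∧ (0 < Dden l3 l4 (b - m)) ∧
      (R1 l1 l2 ρ q m b * X22 l3 l4 m b - R2 l3 l4 ρ q m b * X12 l1 l2 m b =
        q * Real.exp (-q * m) * Dden l1 l2 (b - m) * Dden l3 l4 (b - m) *
          Gfun l1 l2 l3 l4 ρ (b - m)) ∧
      (R1 l1 l2 ρ q m b * X22 l3 l4 m b = R2 l3 l4 ρ q m b * X12 l1 l2 m b ↔
        Gfun l1 l2 l3 l4 ρ (b - m) = 0) := by

  intro m b
  have hmb : m - b = -(b - m) := by ring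
  have hD1 : 0 < Dden l1 l2 (b - m) := by
    have := Real.exp_pos (-l1 * (b - m))
    have := Real.exp_pos (-l2 * (b - m))
    unfold Dden; nlinarith
  have hD2 : 0 < Dden l3 l4 (b - m) := by
    have := Real.exp_pos (-l3 * (b - m))
    have := Real.exp_pos (-l4 * (b - m))
    have h30 : l3 < 0 := lt_trans h31 h10
    have h04 : 0 < l4 := lt_trans h02 h24
    unfold Dden; nlinarith
  have hX12 : X12 l1 l2 m b = -Dden l1 l2 (b - m) := by
    unfold X12 Dden
    rw [hmb]; ring_nf
  have hX22 : X22 l3 l4 m b = Dden l3 l4 (b - m) := by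
    unfold X22 Dden
    rw [hmb]; ring_nf
  have hR1 : R1 l1 l2 ρ q m b = ρ * q * Real.exp (-q * m) * Nnum l1 l2 (b - m) := by
    unfold R1 Nnum
    rw [hmb]; ring_nf
  have hR2 : R2 l3 l4 ρ q m b = (1 - ρ) * q * Real.exp (-q * m) * Nnum l3 l4 (b - m) := by
    unfold R2 Nnum
    rw [hmb]; ring_nf
  have key : R1 l1 l2 ρ q m b * X22 l3 l4 m b - R2 l3 l4 ρ q m b * X12 l1 l2 m b =
      q * Real.exp (-q * m) * Dden l1 l2 (b - m) * Dden l3 l4 (b - m) *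
        Gfun l1 l2 l3 l4 ρ (b - m) := by
    rw [hX12, hX22, hR1, hR2]
    unfold Gfun
    field_simp
    ring
  refine ⟨hD1, hD2, key, ?_⟩
  have hpos : 0 < q * Real.exp (-q * m) * Dden l1 l2 (b - m) * Dden l3 l4 (b - m) :=
    by positivity
  constructor
  · intro h
    have h0 : q * Real.exp (-q * m) * Dden l1 l2 (b - m) * Dden l3 l4 (b - m) *
        Gfun l1 l2 l3 l4 ρ (b - m) = 0 := by rw [← key]; linarith
    rcases mul_eq_zero.mp h0 with h'|h'
    · exact absurd h' (ne_of_gt hpos)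
    · exact h'
  · intro h
    have := key
    rw [h, mul_zero] at this
    linarith
end

section
/- Let λ₃ < λ₁ < 0 < λ₂ < λ₄ be reals, ρ ∈ (0,1), q > 0, and let b, F : I → ℝ be differentiable on an interval I. Define A₁(m) = e^{−λ₁b(m)}(ρλ₂e^{−qm} − F(m))/(λ₁(λ₂ − λ₁)), A₂(m) = e^{−λ₂b(m)}(ρλ₁e^{−qm} − F(m))/(λ₂(λ₁ − λ₂)), A₃(m) = e^{−λ₃b(m)}((1−ρ)λ₄e^{−qm} + F(m))/(λ₃(λ₄ − λ₃)), A₄(m) = e^{−λ₄b(m)}((1−ρ)λ₃e^{−qm} + F(m))/(λ₄(λ₃ − λ₄)). Then for every m ∈ I: (a) λ₁A₁(m)e^{λ₁b(m)} + λ₂A₂(m)e^{λ₂b(m)} = ρe^{−qm}, λ₃A₃(m)e^{λ₃b(m)} + λ₄A₄(m)e^{λ₄b(m)} = (1−ρ)e^{−qm}, λ₁²A₁(m)e^{λ₁b(m)} + λ₂²A₂(m)e^{λ₂b(m)} = F(m), λ₃²A₃(m)e^{λ₃b(m)} + λ₄²A₄(m)e^{λ₄b(m)} = −F(m), so that Σᵢ₌₁⁴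 λᵢ²Aᵢ(m)e^{λᵢb(m)} = 0; and (b) λ₁λ₂(λ₂−λ₁)·[A₁'(m)e^{λ₁m} + A₂'(m)e^{λ₂m}] = X₁₁(m,b(m),F(m))·b'(m) + X₁₂(m,b(m))·F'(m) − R₁(m,b(m)), and λ₃λ₄(λ₄−λ₃)·[A₃'(m)e^{λ₃m} + A₄'(m)e^{λ₄m}] = X₂₁(m,b(m),F(m))·b'(m) + X₂₂(m,b(m))·F'(m) − R₂(m,b(m)); hence the Neumann conditions A₁'(m)e^{λ₁m} + A₂'(m)e^{λ₂m} = 0 and A₃'(m)e^{λ₃m} + A₄'(m)e^{λ₄m} = 0 hold if and only if (b, F) solves the ODE system X₁₁b' + X₁₂F' = R₁, X₂₁b' + X₂₂F' = R₂. -/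
/-- `X₁₁(m,b,F)`. -/
noncomputable def X11 (l1 l2 ρ q m b F : ℝ) : ℝ :=
  l1 * l2 * (ρ * Real.exp (-q * m) *
      (l1 * Real.exp (l2 * (m - b)) - l2 * Real.exp (l1 * (m - b))) +
    (Real.exp (l1 * (m - b)) - Real.exp (l2 * (m - b))) * F)

/-- `X₂₁(m,b,F)`. -/
noncomputable def X21 (l3 l4 ρ q m b F : ℝ) : ℝ :=
  l3 * l4 * ((1 - ρ) * Real.exp (-q * m) *
      (l3 * Real.exp (l4 * (m - b)) - l4 * Real.exp (l3 * (m - b))) -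
    (Real.exp (l3 * (m - b)) - Real.exp (l4 * (m - b))) * F)

/-- `A₁(m) = e^{−λ₁b(m)}(ρλ₂e^{−qm} − F(m))/(λ₁(λ₂−λ₁))`. -/
noncomputable def A1fun (l1 l2 ρ q : ℝ) (b F : ℝ → ℝ) (m : ℝ) : ℝ :=
  Real.exp (-l1 * b m) * (ρ * l2 * Real.exp (-q * m) - F m) / (l1 * (l2 - l1))

/-- `A₂(m) = e^{−λ₂b(m)}(ρλ₁e^{−qm} − F(m))/(λ₂(λ₁−λ₂))`. -/
noncomputable def A2fun (l1 l2 ρ q : ℝ) (b F : ℝ → ℝ) (m : ℝ) : ℝ :=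
  Real.exp (-l2 * b m) * (ρ * l1 * Real.exp (-q * m) - F m) / (l2 * (l1 - l2))

/-- `A₃(m) = e^{−λ₃b(m)}((1−ρ)λ₄e^{−qm} + F(m))/(λ₃(λ₄−λ₃))`. -/
noncomputable def A3fun (l3 l4 ρ q : ℝ) (b F : ℝ → ℝ) (m : ℝ) : ℝ :=
  Real.exp (-l3 * b m) * ((1 - ρ) * l4 * Real.exp (-q * m) + F m) /
    (l3 * (l4 - l3))

/-- `A₄(m) = e^{−λ₄b(m)}((1−ρ)λ₃e^{−qm} + F(m))/(λ₄(λ₃−λ₄))`. -/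
noncomputable def A4fun (l3 l4 ρ q : ℝ) (b F : ℝ → ℝ) (m : ℝ) : ℝ :=
  Real.exp (-l4 * b m) * ((1 - ρ) * l3 * Real.exp (-q * m) + F m) /
    (l4 * (l3 - l4))

/-!
Both pairs of coefficients are instances of one pair: `A₂` is `A₁` with `λ₁, λ₂` swapped, and
`(A₃, A₄)` is `(A₁, A₂)` for `(λ₃, λ₄)` with `(ρ, F)` replaced by `(1 - ρ, -F)`; under this
substitution `X₂₁, X₂₂, R₂` become `X₁₁, -X₁₂, R₁`. For one pair `A_λ, A_μ` the value and
second-moment identities are Cramer's rule for the system with matrix `((λ, μ), (λ², μ²))`, and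
the derivative identity is the product and chain rule together with
`e^{λ(m - b)} = e^{λm} e^{-λb}`. The Neumann conditions then match the ODE system because the
factors `λ₁λ₂(λ₂ - λ₁)` and `λ₃λ₄(λ₄ - λ₃)` do not vanish.
-/

lemma A2fun_eq_A1fun (l1 l2 ρ q : ℝ) (b F : ℝ → ℝ) :
    A2fun l1 l2 ρ q b F = A1fun l2 l1 ρ q b F :=
  rfl

lemma A3fun_eq_A1fun (l3 l4 ρ q : ℝ) (b F : ℝ → ℝ) :
    A3fun l3 l4 ρ q b F = A1fun l3 l4 (1 - ρ) q b (-F) := by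
  funext m
  simp only [A3fun, A1fun, Pi.neg_apply, sub_neg_eq_add]

lemma A4fun_eq_A1fun (l3 l4 ρ q : ℝ) (b F : ℝ → ℝ) :
    A4fun l3 l4 ρ q b F = A1fun l4 l3 (1 - ρ) q b (-F) := by
  funext m
  simp only [A4fun, A1fun, Pi.neg_apply, sub_neg_eq_add]

lemma X21_eq_X11 (l3 l4 ρ q m b F : ℝ) : X21 l3 l4 ρ q m b F = X11 l3 l4 (1 - ρ) q m b (-F) := by
  simp only [X21, X11]
  ring

lemma X22_mul_eq_X12_mul_neg (l3 l4 m b x : ℝ) : X22 l3 l4 m b * x = X12 l3 l4 m b * -x := by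
  simp only [X22, X12]
  ring

lemma R2_eq_R1 (l3 l4 ρ q m b : ℝ) : R2 l3 l4 ρ q m b = R1 l3 l4 (1 - ρ) q m b :=
  rfl

section Pair

variable {a c : ℝ} (w q : ℝ) (b F : ℝ → ℝ) (m : ℝ)

lemma hasDerivAt_A1fun (hb : DifferentiableAt ℝ b m) (hF : DifferentiableAt ℝ F m) :
    HasDerivAt (A1fun a c w q b F)
      ((Real.exp (-a * b m) * (-a * deriv b m) * (w * c * Real.exp (-q * m) - F m) +
          Real.exp (-a * b m) * (w * c * (Real.exp (-q * m) * (-q * 1)) - deriv F m)) /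
        (a * (c - a))) m :=
  (((hb.hasDerivAt.const_mul (-a)).exp.mul
    ((((hasDerivAt_id' m).const_mul (-q)).exp.const_mul (w * c)).sub hF.hasDerivAt)).div_const _)

lemma pair_sum_mul_A1fun_mul_exp (ha : a ≠ 0) (hc : c ≠ 0) (hac : a ≠ c) :
    a * A1fun a c w q b F m * Real.exp (a * b m) + c * A1fun c a w q b F m * Real.exp (c * b m) =
      w * Real.exp (-q * m) := by
  have hca : c - a ≠ 0 := sub_ne_zero.mpr hac.symm
  have hac' : a - c ≠ 0 := sub_ne_zero.mpr hac
  simp only [A1fun, neg_mul, Real.exp_neg]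
  field_simp
  ring

lemma pair_sum_sq_mul_A1fun_mul_exp (hac : a ≠ c) :
    a ^ 2 * A1fun a c w q b F m * Real.exp (a * b m) +
        c ^ 2 * A1fun c a w q b F m * Real.exp (c * b m) = F m := by
  have hca : c - a ≠ 0 := sub_ne_zero.mpr hac.symm
  have hac' : a - c ≠ 0 := sub_ne_zero.mpr hac
  simp only [A1fun, neg_mul, Real.exp_neg]
  field_simp
  ring

lemma pair_deriv_A1fun_mul_exp (ha : a ≠ 0) (hc : c ≠ 0) (hac : a ≠ c)
    (hb : DifferentiableAt ℝ b m) (hF : DifferentiableAt ℝ F m) :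
    a * c * (c - a) *
        (deriv (A1fun a c w q b F) m * Real.exp (a * m) +
          deriv (A1fun c a w q b F) m * Real.exp (c * m)) =
      X11 a c w q m (b m) (F m) * deriv b m + X12 a c m (b m) * deriv F m -
        R1 a c w q m (b m) := by
  have hca : c - a ≠ 0 := sub_ne_zero.mpr hac.symm
  have hac' : a - c ≠ 0 := sub_ne_zero.mpr hac
  have hsplit (t : ℝ) : Real.exp (t * (m - b m)) = Real.exp (t * m) * Real.exp (-t * b m) := by
    rw [← Real.exp_add]
    ring_nf
  rw [(hasDerivAt_A1fun w q b F m hb hF).deriv, (hasDerivAt_A1fun w q b F m hb hF).deriv]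
  simp only [X11, X12, R1, hsplit]
  field_simp
  ring

end Pair

lemma mul_eq_sub_zero_iff {k x y r : ℝ} (hk : k ≠ 0) (h : k * x = y - r) : x = 0 ↔ y = r := by
  rw [← sub_eq_zero (a := y), ← h, mul_eq_zero, or_iff_right hk]

theorem stmt9_general (l1 l2 l3 l4 ρ q : ℝ)
    (h31 : l3 < l1) (h10 : l1 < 0) (h02 : (0:ℝ) < l2) (h24 : l2 < l4)
    (I : Set ℝ) (b F : ℝ → ℝ)
    (hb : ∀ m ∈ I, DifferentiableAt ℝ b m)
    (hF : ∀ m ∈ I, DifferentiableAt ℝ F m) :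
    (∀ m ∈ I,
      l1 * A1fun l1 l2 ρ q b F m * Real.exp (l1 * b m) +
          l2 * A2fun l1 l2 ρ q b F m * Real.exp (l2 * b m) =
        ρ * Real.exp (-q * m) ∧
      l3 * A3fun l3 l4 ρ q b F m * Real.exp (l3 * b m) +
          l4 * A4fun l3 l4 ρ q b F m * Real.exp (l4 * b m) =
        (1 - ρ) * Real.exp (-q * m) ∧
      l1 ^ 2 * A1fun l1 l2 ρ q b F m * Real.exp (l1 * b m) +
          l2 ^ 2 * A2fun l1 l2 ρ q b F m * Real.exp (l2 * b m) = F m ∧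
      l3 ^ 2 * A3fun l3 l4 ρ q b F m * Real.exp (l3 * b m) +
          l4 ^ 2 * A4fun l3 l4 ρ q b F m * Real.exp (l4 * b m) = -F m ∧
      l1 ^ 2 * A1fun l1 l2 ρ q b F m * Real.exp (l1 * b m) +
          l2 ^ 2 * A2fun l1 l2 ρ q b F m * Real.exp (l2 * b m) +
          l3 ^ 2 * A3fun l3 l4 ρ q b F m * Real.exp (l3 * b m) +
          l4 ^ 2 * A4fun l3 l4 ρ q b F m * Real.exp (l4 * b m) = 0) ∧
    (∀ m ∈ I,
      l1 * l2 * (l2 - l1) *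
          (deriv (A1fun l1 l2 ρ q b F) m * Real.exp (l1 * m) +
            deriv (A2fun l1 l2 ρ q b F) m * Real.exp (l2 * m)) =
        X11 l1 l2 ρ q m (b m) (F m) * deriv b m +
          X12 l1 l2 m (b m) * deriv F m - R1 l1 l2 ρ q m (b m) ∧
      l3 * l4 * (l4 - l3) *
          (deriv (A3fun l3 l4 ρ q b F) m * Real.exp (l3 * m) +
            deriv (A4fun l3 l4 ρ q b F) m * Real.exp (l4 * m)) =
        X21 l3 l4 ρ q m (b m) (F m) * deriv b m +
          X22 l3 l4 m (b m) * deriv F m - R2 l3 l4 ρ q m (b m)) ∧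
    (∀ m ∈ I,
      ((deriv (A1fun l1 l2 ρ q b F) m * Real.exp (l1 * m) +
          deriv (A2fun l1 l2 ρ q b F) m * Real.exp (l2 * m) = 0 ∧
        deriv (A3fun l3 l4 ρ q b F) m * Real.exp (l3 * m) +
          deriv (A4fun l3 l4 ρ q b F) m * Real.exp (l4 * m) = 0) ↔
      (X11 l1 l2 ρ q m (b m) (F m) * deriv b m +
          X12 l1 l2 m (b m) * deriv F m = R1 l1 l2 ρ q m (b m) ∧
        X21 l3 l4 ρ q m (b m) (F m) * deriv b m +
          X22 l3 l4 m (b m) * deriv F m = R2 l3 l4 ρ q m (b m)))) := by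
  have hl1 : l1 ≠ 0 := h10.ne
  have hl2 : l2 ≠ 0 := h02.ne'
  have hl3 : l3 ≠ 0 := (h31.trans h10).ne
  have hl4 : l4 ≠ 0 := (h02.trans h24).ne'
  have hl12 : l1 ≠ l2 := (h10.trans h02).ne
  have hl34 : l3 ≠ l4 := (h31.trans (h10.trans (h02.trans h24))).ne
  rw [A2fun_eq_A1fun, A4fun_eq_A1fun, A3fun_eq_A1fun]
  have hderiv (m : ℝ) (hm : m ∈ I) :=
    And.intro (pair_deriv_A1fun_mul_exp ρ q b F m hl1 hl2 hl12 (hb m hm) (hF m hm))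
      (pair_deriv_A1fun_mul_exp (1 - ρ) q b (-F) m hl3 hl4 hl34 (hb m hm) (hF m hm).neg)
  simp only [Pi.neg_apply, deriv.neg'] at hderiv
  simp only [X21_eq_X11, X22_mul_eq_X12_mul_neg, R2_eq_R1]
  refine ⟨fun m _ => ?_, hderiv, fun m hm => ?_⟩
  · have s12 := pair_sum_sq_mul_A1fun_mul_exp ρ q b F m hl12
    have s34 := pair_sum_sq_mul_A1fun_mul_exp (1 - ρ) q b (-F) m hl34
    refine ⟨pair_sum_mul_A1fun_mul_exp ρ q b F m hl1 hl2 hl12,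
      pair_sum_mul_A1fun_mul_exp (1 - ρ) q b (-F) m hl3 hl4 hl34, s12, s34, ?_⟩
    rw [Pi.neg_apply] at s34
    linarith
  · obtain ⟨h12, h34⟩ := hderiv m hm
    exact and_congr (mul_eq_sub_zero_iff (by simp [hl1, hl2, sub_eq_zero, hl12.symm]) h12)
      (mul_eq_sub_zero_iff (by simp [hl3, hl4, sub_eq_zero, hl34.symm]) h34)

/-- Reduction of the differential-algebraic system for the dividend boundary to
the ODE system `X₁₁b' + X₁₂F' = R₁`, `X₂₁b' + X₂₂F' = R₂`. -/
theorem stmt9 (l1 l2 l3 l4 ρ q : ℝ)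
    (h31 : l3 < l1) (h10 : l1 < 0) (h02 : (0:ℝ) < l2) (h24 : l2 < l4)
    (hρ : ρ ∈ Set.Ioo (0:ℝ) 1) (hq : 0 < q)
    (I : Set ℝ) (b F : ℝ → ℝ)
    (hb : ∀ m ∈ I, DifferentiableAt ℝ b m)
    (hF : ∀ m ∈ I, DifferentiableAt ℝ F m) :
    (∀ m ∈ I,
      l1 * A1fun l1 l2 ρ q b F m * Real.exp (l1 * b m) +
          l2 * A2fun l1 l2 ρ q b F m * Real.exp (l2 * b m) =
        ρ * Real.exp (-q * m) ∧
      l3 * A3fun l3 l4 ρ q b F m * Real.exp (l3 * b m) +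
          l4 * A4fun l3 l4 ρ q b F m * Real.exp (l4 * b m) =
        (1 - ρ) * Real.exp (-q * m) ∧
      l1 ^ 2 * A1fun l1 l2 ρ q b F m * Real.exp (l1 * b m) +
          l2 ^ 2 * A2fun l1 l2 ρ q b F m * Real.exp (l2 * b m) = F m ∧
      l3 ^ 2 * A3fun l3 l4 ρ q b F m * Real.exp (l3 * b m) +
          l4 ^ 2 * A4fun l3 l4 ρ q b F m * Real.exp (l4 * b m) = -F m ∧
      l1 ^ 2 * A1fun l1 l2 ρ q b F m * Real.exp (l1 * b m) +
          l2 ^ 2 * A2fun l1 l2 ρ q b F m * Real.exp (l2 * b m) +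
          l3 ^ 2 * A3fun l3 l4 ρ q b F m * Real.exp (l3 * b m) +
          l4 ^ 2 * A4fun l3 l4 ρ q b F m * Real.exp (l4 * b m) = 0) ∧
    (∀ m ∈ I,
      l1 * l2 * (l2 - l1) *
          (deriv (A1fun l1 l2 ρ q b F) m * Real.exp (l1 * m) +
            deriv (A2fun l1 l2 ρ q b F) m * Real.exp (l2 * m)) =
        X11 l1 l2 ρ q m (b m) (F m) * deriv b m +
          X12 l1 l2 m (b m) * deriv F m - R1 l1 l2 ρ q m (b m) ∧
      l3 * l4 * (l4 - l3) *
          (deriv (A3fun l3 l4 ρ q b F) m * Real.exp (l3 * m) +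
            deriv (A4fun l3 l4 ρ q b F) m * Real.exp (l4 * m)) =
        X21 l3 l4 ρ q m (b m) (F m) * deriv b m +
          X22 l3 l4 m (b m) * deriv F m - R2 l3 l4 ρ q m (b m)) ∧
    (∀ m ∈ I,
      ((deriv (A1fun l1 l2 ρ q b F) m * Real.exp (l1 * m) +
          deriv (A2fun l1 l2 ρ q b F) m * Real.exp (l2 * m) = 0 ∧
        deriv (A3fun l3 l4 ρ q b F) m * Real.exp (l3 * m) +
          deriv (A4fun l3 l4 ρ q b F) m * Real.exp (l4 * m) = 0) ↔
      (X11 l1 l2 ρ q m (b m) (F m) * deriv b m +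
          X12 l1 l2 m (b m) * deriv F m = R1 l1 l2 ρ q m (b m) ∧
        X21 l3 l4 ρ q m (b m) (F m) * deriv b m +
          X22 l3 l4 m (b m) * deriv F m = R2 l3 l4 ρ q m (b m)))) :=
  stmt9_general l1 l2 l3 l4 ρ q h31 h10 h02 h24 I b F hb hF
end

section
/- Let λ₃ < λ₁ < 0 < λ₂ < λ₄ be reals, ρ ∈ (0,1), q > 0, and let b, F : [0,ε) → ℝ be differentiable with G(b(0)) = 0 and F(0) = ρ·N₁(b(0))/D₁(b(0)). Assume that at m = 0 the pair (b'(0), F'(0)) satisfies the linear system X₁₁(0,b(0),F(0))·b'(0) + X₁₂(0,b(0))·F'(0) = R₁(0,b(0)) and X₂₁(0,b(0),F(0))·b'(0) + X₂₂(0,b(0))·F'(0) = R₂(0,b(0)), and that X₁₁(0,b(0),F(0))·X₂₂(0,b(0)) − X₂₁(0,b(0),F(0))·X₁₂(0,b(0)) ≠ 0. Then b'(0) = 0 and F'(0) = −q·F(0). -/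
/-- At `m = 0`, the solution of the linear system satisfies `b'(0) = 0` and
`F'(0) = −q·F(0)`. -/
theorem stmt10 (l1 l2 l3 l4 ρ q ε : ℝ)
    (h31 : l3 < l1) (h10 : l1 < 0) (h02 : (0:ℝ) < l2) (h24 : l2 < l4)
    (hρ : ρ ∈ Set.Ioo (0:ℝ) 1) (hq : 0 < q) (hε : 0 < ε)
    (b F : ℝ → ℝ)
    (hb : ∀ m ∈ Set.Ico (0:ℝ) ε, DifferentiableAt ℝ b m)
    (hF : ∀ m ∈ Set.Ico (0:ℝ) ε, DifferentiableAt ℝ F m)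
    (hG0 : Gfun l1 l2 l3 l4 ρ (b 0) = 0)
    (hF0 : F 0 = ρ * Nnum l1 l2 (b 0) / Dden l1 l2 (b 0))
    (hsys1 : X11 l1 l2 ρ q 0 (b 0) (F 0) * deriv b 0 +
        X12 l1 l2 0 (b 0) * deriv F 0 = R1 l1 l2 ρ q 0 (b 0))
    (hsys2 : X21 l3 l4 ρ q 0 (b 0) (F 0) * deriv b 0 +
        X22 l3 l4 0 (b 0) * deriv F 0 = R2 l3 l4 ρ q 0 (b 0))
    (hdet : X11 l1 l2 ρ q 0 (b 0) (F 0) * X22 l3 l4 0 (b 0) -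
        X21 l3 l4 ρ q 0 (b 0) (F 0) * X12 l1 l2 0 (b 0) ≠ 0) :
    deriv b 0 = 0 ∧ deriv F 0 = -q * F 0 := by
  obtain ⟨hρ0, hρ1⟩ := hρ
  have hE1 := Real.exp_pos (-l1 * b 0)
  have hE2 := Real.exp_pos (-l2 * b 0)
  have hE3 := Real.exp_pos (-l3 * b 0)
  have hE4 := Real.exp_pos (-l4 * b 0)
  have hD1pos : 0 < Dden l1 l2 (b 0) := by
    unfold Dden; nlinarith
  have hD2pos : 0 < Dden l3 l4 (b 0) := by
    unfold Dden; nlinarith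
  have hF0' : F 0 * Dden l1 l2 (b 0) = ρ * Nnum l1 l2 (b 0) := by
    rw [hF0]; field_simp
  have hG' : F 0 * Dden l3 l4 (b 0) = -((1 - ρ) * Nnum l3 l4 (b 0)) := by
    unfold Gfun at hG0
    field_simp at hG0
    rw [hF0]
    field_simp
    linarith [hG0]
  -- candidate equations
  have hc1 : X12 l1 l2 0 (b 0) * (-q * F 0) = R1 l1 l2 ρ q 0 (b 0) := by
    unfold X12 R1
    rw [show l1 * ((0:ℝ) - b 0) = -l1 * b 0 from by ring,
        show l2 * ((0:ℝ) - b 0) = -l2 * b 0 from by ring,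
        show -q * (0:ℝ) = 0 from by ring, Real.exp_zero]
    unfold Dden Nnum at hF0'
    linear_combination q * hF0'
  have hc2 : X22 l3 l4 0 (b 0) * (-q * F 0) = R2 l3 l4 ρ q 0 (b 0) := by
    unfold X22 R2
    rw [show l3 * ((0:ℝ) - b 0) = -l3 * b 0 from by ring,
        show l4 * ((0:ℝ) - b 0) = -l4 * b 0 from by ring,
        show -q * (0:ℝ) = 0 from by ring, Real.exp_zero]
    unfold Dden Nnum at hG'
    linear_combination -q * hG'
  set A := X11 l1 l2 ρ q 0 (b 0) (F 0)
  set B := X12 l1 l2 0 (b 0)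
  set C := X21 l3 l4 ρ q 0 (b 0) (F 0)
  set D := X22 l3 l4 0 (b 0)
  set x := deriv b 0
  set y := deriv F 0 + q * F 0 with hy
  have e1 : A * x + B * y = 0 := by linear_combination hsys1 - hc1
  have e2 : C * x + D * y = 0 := by linear_combination hsys2 - hc2
  have hx : x = 0 := by
    have : (A * D - C * B) * x = 0 := by linear_combination D * e1 - B * e2
    exact (mul_eq_zero.mp this).resolve_left hdet
  have hyy : y = 0 := by
    have : (A * D - C * B) * y = 0 := by linear_combination A * e2 - C * e1
    exact (mul_eq_zero.mp this).resolve_left hdet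
  refine ⟨hx, ?_⟩
  have := hy ▸ hyy
  linarith [hyy]
end

section
/- Let λ₃ < λ₁ < 0 < λ₂ < λ₄ be reals, ρ ∈ (0,1), q > 0, and let b₀ > 0 and F₀ < 0 be reals with F₀ + (1−ρ)λ₄ > 0. Then X₁₁(0,b₀,F₀) > 0, X₁₂(0,b₀) < 0, X₂₁(0,b₀,F₀) > 0, X₂₂(0,b₀) > 0, and consequently the determinant X₁₁(0,b₀,F₀)·X₂₂(0,b₀) − X₂₁(0,b₀,F₀)·X₁₂(0,b₀) > 0. -/
/-- Sign conditions on the coefficient matrix of the ODE system at `m = 0` and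
positivity of its determinant. -/
theorem stmt11 (l1 l2 l3 l4 ρ q b₀ F₀ : ℝ)
    (h31 : l3 < l1) (h10 : l1 < 0) (h02 : (0:ℝ) < l2) (h24 : l2 < l4)
    (hρ : ρ ∈ Set.Ioo (0:ℝ) 1) (hq : 0 < q)
    (hb₀ : 0 < b₀) (hF₀ : F₀ < 0) (hF₀' : 0 < F₀ + (1 - ρ) * l4) :
    0 < X11 l1 l2 ρ q 0 b₀ F₀ ∧
    X12 l1 l2 0 b₀ < 0 ∧
    0 < X21 l3 l4 ρ q 0 b₀ F₀ ∧
    0 < X22 l3 l4 0 b₀ ∧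
    0 < X11 l1 l2 ρ q 0 b₀ F₀ * X22 l3 l4 0 b₀ -
        X21 l3 l4 ρ q 0 b₀ F₀ * X12 l1 l2 0 b₀ := by

  obtain ⟨hρ0, hρ1⟩ := hρ
  simp only [X11, X12, X21, X22, mul_zero, neg_zero, Real.exp_zero, mul_one]
  set e1 := Real.exp (l1 * (0 - b₀)) with he1
  set e2 := Real.exp (l2 * (0 - b₀)) with he2
  set e3 := Real.exp (l3 * (0 - b₀)) with he3
  set e4 := Real.exp (l4 * (0 - b₀)) with he4
  have hl3 : l3 < 0 := h31.trans h10
  have hl4 : 0 < l4 := h02.trans h24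
  have h1 : 1 < e1 := by
    rw [he1, ← Real.exp_zero]
    exact Real.exp_lt_exp.mpr (by nlinarith)
  have h2 : 0 < e2 ∧ e2 < 1 := by
    constructor
    · exact Real.exp_pos _
    · rw [he2, Real.exp_lt_one_iff]; nlinarith
  have h3 : 1 < e3 := by
    rw [he3, ← Real.exp_zero]
    exact Real.exp_lt_exp.mpr (by nlinarith)
  have h4 : 0 < e4 ∧ e4 < 1 := by
    constructor
    · exact Real.exp_pos _
    · rw [he4, Real.exp_lt_one_iff]; nlinarith
  obtain ⟨h2a, h2b⟩ := h2
  obtain ⟨h4a, h4b⟩ := h4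
  have hX12 : l1 * e2 - l2 * e1 < 0 := by nlinarith
  have hX22 : 0 < l4 * e3 - l3 * e4 := by nlinarith
  have hX11 : 0 < l1 * l2 * (ρ * (l1 * e2 - l2 * e1) + (e1 - e2) * F₀) := by
    have hin : ρ * (l1 * e2 - l2 * e1) + (e1 - e2) * F₀ < 0 := by nlinarith
    exact mul_pos_of_neg_of_neg (mul_neg_of_neg_of_pos h10 h02) hin
  have hX21 : 0 < l3 * l4 * ((1 - ρ) * (l3 * e4 - l4 * e3) - (e3 - e4) * F₀) := by
    have hin : (1 - ρ) * (l3 * e4 - l4 * e3) - (e3 - e4) * F₀ < 0 := by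
      have t1 : 0 < e4 * (-((1 - ρ) * l3 + F₀)) := mul_pos h4a (by nlinarith)
      have t2 : 0 < e3 * (F₀ + (1 - ρ) * l4) := mul_pos (by linarith) hF₀'
      nlinarith
    exact mul_pos_of_neg_of_neg (mul_neg_of_neg_of_pos hl3 hl4) hin
  refine ⟨hX11, hX12, hX21, hX22, ?_⟩
  nlinarith [mul_pos hX11 hX22, mul_pos_of_neg_of_neg (show l3 * l4 * ((1 - ρ) * (l3 * e4 - l4 * e3) - (e3 - e4) * F₀) * (l1 * e2 - l2 * e1) < 0 from mul_neg_of_pos_of_neg hX21 hX12) hX12]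
end

section
/- Let λ₃ < λ₁ < 0 < λ₂ < λ₄ be reals, ρ ∈ (0,1), q > 0, and let b₀ > 0 and F₀ < 0 be reals with F₀ + (1−ρ)λ₄ > 0. Define I₁ = q²[(1−ρ)·X₁₂(0,b₀)·N₂(b₀) − ρ·X₂₂(0,b₀)·N₁(b₀)], I₂ = q·λ₁λ₂·X₂₂(0,b₀)·[ρ·D₁(b₀) + F₀·(e^{−λ₂b₀} − e^{−λ₁b₀})], and I₃ = q·λ₃λ₄·X₁₂(0,b₀)·[−(1−ρ)·D₂(b₀) + F₀·(e^{−λ₄b₀} − e^{−λ₃b₀})]. Then I₁ = −q²·D₁(b₀)·D₂(b₀)·G(b₀), I₂ < 0, and I₃ < 0. In particular, if G(b₀) = 0 then I₁ + I₂ + I₃ < 0. -/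
/-- The computation behind the local concavity `b''(0) < 0` of the dividend
boundary: `I₁ = −q²D₁(b₀)D₂(b₀)G(b₀)`, `I₂ < 0`, `I₃ < 0`, whence
`I₁ + I₂ + I₃ < 0` when `G(b₀) = 0`. -/
theorem stmt12 (l1 l2 l3 l4 ρ q b₀ F₀ : ℝ)
    (h31 : l3 < l1) (h10 : l1 < 0) (h02 : (0:ℝ) < l2) (h24 : l2 < l4)
    (hρ : ρ ∈ Set.Ioo (0:ℝ) 1) (hq : 0 < q)
    (hb₀ : 0 < b₀) (hF₀ : F₀ < 0) (hF₀' : 0 < F₀ + (1 - ρ) * l4) :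
    (q ^ 2 * ((1 - ρ) * X12 l1 l2 0 b₀ * Nnum l3 l4 b₀ -
        ρ * X22 l3 l4 0 b₀ * Nnum l1 l2 b₀) =
      -(q ^ 2) * Dden l1 l2 b₀ * Dden l3 l4 b₀ * Gfun l1 l2 l3 l4 ρ b₀) ∧
    (q * (l1 * l2) * X22 l3 l4 0 b₀ *
        (ρ * Dden l1 l2 b₀ +
          F₀ * (Real.exp (-l2 * b₀) - Real.exp (-l1 * b₀))) < 0) ∧
    (q * (l3 * l4) * X12 l1 l2 0 b₀ *
        (-(1 - ρ) * Dden l3 l4 b₀ +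
          F₀ * (Real.exp (-l4 * b₀) - Real.exp (-l3 * b₀))) < 0) ∧
    (Gfun l1 l2 l3 l4 ρ b₀ = 0 →
      q ^ 2 * ((1 - ρ) * X12 l1 l2 0 b₀ * Nnum l3 l4 b₀ -
          ρ * X22 l3 l4 0 b₀ * Nnum l1 l2 b₀) +
        q * (l1 * l2) * X22 l3 l4 0 b₀ *
          (ρ * Dden l1 l2 b₀ +
            F₀ * (Real.exp (-l2 * b₀) - Real.exp (-l1 * b₀))) +
        q * (l3 * l4) * X12 l1 l2 0 b₀ *
          (-(1 - ρ) * Dden l3 l4 b₀ +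
            F₀ * (Real.exp (-l4 * b₀) - Real.exp (-l3 * b₀))) < 0) := by
  obtain ⟨hρ0, hρ1⟩ := hρ
  have hl3 : l3 < 0 := h31.trans h10
  have hl4 : 0 < l4 := h02.trans h24
  have h1ρ : 0 < 1 - ρ := by linarith
  -- exponentials
  have hE1 : 0 < Real.exp (-l1 * b₀) := Real.exp_pos _
  have hE2 : 0 < Real.exp (-l2 * b₀) := Real.exp_pos _
  have hE3 : 0 < Real.exp (-l3 * b₀) := Real.exp_pos _
  have hE4 : 0 < Real.exp (-l4 * b₀) := Real.exp_pos _
  have h21 : Real.exp (-l2 * b₀) < Real.exp (-l1 * b₀) := by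
    apply Real.exp_lt_exp.mpr; nlinarith
  have h43 : Real.exp (-l4 * b₀) < Real.exp (-l3 * b₀) := by
    apply Real.exp_lt_exp.mpr; nlinarith
  have hD1 : 0 < Dden l1 l2 b₀ := by
    unfold Dden; nlinarith [mul_pos h02 hE1, mul_pos (neg_pos.mpr h10) hE2]
  have hD2 : 0 < Dden l3 l4 b₀ := by
    unfold Dden; nlinarith [mul_pos hl4 hE3, mul_pos (neg_pos.mpr hl3) hE4]
  have hX12 : X12 l1 l2 0 b₀ = -Dden l1 l2 b₀ := by
    unfold X12 Dden; ring_nf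
  have hX22 : X22 l3 l4 0 b₀ = Dden l3 l4 b₀ := by
    unfold X22 Dden; ring_nf
  have hbr2 : 0 < ρ * Dden l1 l2 b₀ +
      F₀ * (Real.exp (-l2 * b₀) - Real.exp (-l1 * b₀)) := by
    have h1 : 0 < F₀ * (Real.exp (-l2 * b₀) - Real.exp (-l1 * b₀)) :=
      mul_pos_of_neg_of_neg hF₀ (by linarith)
    have h2 : 0 < ρ * Dden l1 l2 b₀ := mul_pos hρ0 hD1
    linarith
  have hbr3 : -(1 - ρ) * Dden l3 l4 b₀ +
      F₀ * (Real.exp (-l4 * b₀) - Real.exp (-l3 * b₀)) < 0 := by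
    have p1 : 0 < (F₀ + (1 - ρ) * l4) * (Real.exp (-l3 * b₀) - Real.exp (-l4 * b₀)) :=
      mul_pos hF₀' (by linarith)
    have p2 : 0 < (1 - ρ) * (l4 - l3) * Real.exp (-l4 * b₀) :=
      mul_pos (mul_pos h1ρ (by linarith)) hE4
    unfold Dden; nlinarith
  have hI2 : q * (l1 * l2) * X22 l3 l4 0 b₀ *
      (ρ * Dden l1 l2 b₀ +
        F₀ * (Real.exp (-l2 * b₀) - Real.exp (-l1 * b₀))) < 0 := by
    rw [hX22]
    have h12 : l1 * l2 < 0 := mul_neg_of_neg_of_pos h10 h02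
    have : q * (l1 * l2) * Dden l3 l4 b₀ < 0 :=
      mul_neg_of_neg_of_pos (mul_neg_of_pos_of_neg hq h12) hD2
    exact mul_neg_of_neg_of_pos this hbr2
  have hI3 : q * (l3 * l4) * X12 l1 l2 0 b₀ *
      (-(1 - ρ) * Dden l3 l4 b₀ +
        F₀ * (Real.exp (-l4 * b₀) - Real.exp (-l3 * b₀))) < 0 := by
    rw [hX12]
    have h34 : l3 * l4 < 0 := mul_neg_of_neg_of_pos hl3 hl4
    have : 0 < q * (l3 * l4) * -Dden l1 l2 b₀ :=
      mul_pos_of_neg_of_neg (mul_neg_of_pos_of_neg hq h34) (by linarith)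
    exact mul_neg_of_pos_of_neg this hbr3
  have hI1 : q ^ 2 * ((1 - ρ) * X12 l1 l2 0 b₀ * Nnum l3 l4 b₀ -
        ρ * X22 l3 l4 0 b₀ * Nnum l1 l2 b₀) =
      -(q ^ 2) * Dden l1 l2 b₀ * Dden l3 l4 b₀ * Gfun l1 l2 l3 l4 ρ b₀ := by
    rw [hX12, hX22]
    unfold Gfun
    field_simp
    ring
  refine ⟨hI1, hI2, hI3, fun hG => ?_⟩
  rw [hI1, hG, mul_zero]
  linarith
end

section
/- Let μ, σ, δ, γ > 0 and ρ ∈ (0,1), with λ₁ = (−μ − √(μ² + 2σ²δ))/σ², λ₂ = (−μ + √(μ² + 2σ²δ))/σ², λ₃ = (−μ − √(μ² + 2σ²(δ+γ)))/σ², λ₄ = (−μ + √(μ² + 2σ²(δ+γ)))/σ², and let q > 0 and m̄ > 0. Suppose b, F : [0, m̄] → ℝ are twice continuously differentiable, satisfy for all m ∈ [0, m̄] the ODE system X₁₁(m,b(m),F(m))·b'(m) + X₁₂(m,b(m))·F'(m) = R₁(m,b(m)) and X₂₁(m,b(m),F(m))·b'(m) + X₂₂(m,b(m))·F'(m) = R₂(m,b(m)),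 with initial conditions G(b(0)) = 0 and F(0) = ρ·N₁(b(0))/D₁(b(0)), and suppose X₁₁(m,b(m),F(m))·X₂₂(m,b(m)) − X₂₁(m,b(m),F(m))·X₁₂(m,b(m)) > 0 for all m ∈ [0, m̄]. Then: (a) b'(0) = 0; (b) there exists ε ∈ (0, m̄] such that b''(m) < 0 for all m ∈ [0, ε) (b is concave in a right-neighborhood of 0); (c) b'(m) ≤ 0 for all m ∈ [0, m̄], i.e., the dividend boundary b is nonincreasing. -/
/-! By Cramer's rule the ODE system gives `det · b' = q e^{-qm} D₁ D₂ G(b - m)`, where `det`,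
`D₁`, `D₂ > 0` and `G` is strictly increasing with `G(b(0)) = 0`; so `b'(m)` has the sign of
`b(m) - m - b(0)`. Hence `b'(0) = 0`, and wherever the graph of `b` touches the line
`b(0) + m` its slope is `0 < 1`, so `b` never crosses above that line and `b' ≤ 0` throughout.
Differentiating the identity at `0`, where `b'` and `G(b - m)` vanish, gives
`det(0) b''(0) = -q D₁ D₂ G'(b(0)) < 0`, and continuity of `b''` extends this to some `[0, ε)`. -/

open Set

theorem image_le_add_mul_sub_of_deriv_lt {f f' : ℝ → ℝ} {a b C : ℝ}
    (hf : ∀ x ∈ Icc a b, HasDerivWithinAt f (f' x) (Icc a b) x)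
    (bound : ∀ x ∈ Ico a b, f x = f a + C * (x - a) → f' x < C) :
    ∀ x ∈ Icc a b, f x ≤ f a + C * (x - a) :=
  fun _ hx => image_le_of_deriv_right_lt_deriv_boundary
    (fun x hx => (hf x hx).continuousWithinAt)
    (fun x hx => (hf x (Ico_subset_Icc_self hx)).mono_of_mem_nhdsWithin (Icc_mem_nhdsGE_of_mem hx))
    (by simp)
    (fun x => by simpa using ((hasDerivAt_id x).sub_const a).const_mul C |>.const_add (f a))
    bound hx

theorem exists_forall_Ico_neg_of_continuousWithinAt {f : ℝ → ℝ} {a b : ℝ} (hab : a < b)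
    (hf : ContinuousWithinAt f (Icc a b) a) (ha : f a < 0) :
    ∃ ε, a < ε ∧ ε ≤ b ∧ ∀ x ∈ Ico a ε, f x < 0 := by
  have hev : {x | f x < 0} ∈ nhdsWithin a (Ici a) :=
    nhdsWithin_Icc_eq_nhdsGE hab ▸ hf.eventually (gt_mem_nhds ha)
  obtain ⟨ε, ⟨haε, hεb⟩, hsub⟩ := (mem_nhdsGE_iff_exists_mem_Ioc_Ico_subset hab).1 hev
  exact ⟨ε, haε, hεb, hsub⟩

theorem deriv_neg_of_mul_eq_comp_sub_id {P E Ψ y y' : ℝ → ℝ} {s : Set ℝ} {x y'' ψ : ℝ}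
    (hs : UniqueDiffWithinAt ℝ s x) (hx : x ∈ s)
    (hP : DifferentiableWithinAt ℝ P s x) (hE : DifferentiableWithinAt ℝ E s x)
    (hy : HasDerivWithinAt y (y' x) s x) (hy' : HasDerivWithinAt y' y'' s x)
    (hΨ : HasDerivAt Ψ ψ (y x - x)) (h : ∀ m ∈ s, P m * y' m = E m * Ψ (y m - m))
    (hy'x : y' x = 0) (hΨx : Ψ (y x - x) = 0) (hPx : 0 < P x) (hEx : 0 < E x) (hψ : 0 < ψ) :
    y'' < 0 := by
  have hv : HasDerivWithinAt (fun m => y m - m) (y' x - 1) s x := hy.sub (hasDerivWithinAt_id x s)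
  have hrhs := hE.hasDerivWithinAt.mul (hΨ.comp_hasDerivWithinAt_of_eq x hv rfl)
  have := hs.eq_deriv s (hP.hasDerivWithinAt.mul hy') (hrhs.congr_of_mem h hx)
  rw [hy'x, Function.comp_apply, hΨx] at this
  nlinarith [mul_pos hEx hψ]

theorem abs_lt_sqrt_sq_add_mul_sq (μ : ℝ) {σ c : ℝ} (hσ : σ ≠ 0) (hc : 0 < c) :
    |μ| < Real.sqrt (μ ^ 2 + 2 * σ ^ 2 * c) :=
  (Real.lt_sqrt (abs_nonneg μ)).2 (by rw [sq_abs]; nlinarith [sq_pos_of_ne_zero hσ])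

theorem neg_sub_sqrt_div_sq_neg (μ : ℝ) {σ c : ℝ} (hσ : σ ≠ 0) (hc : 0 < c) :
    (-μ - Real.sqrt (μ ^ 2 + 2 * σ ^ 2 * c)) / σ ^ 2 < 0 :=
  div_neg_of_neg_of_pos (by linarith [neg_abs_le μ, abs_lt_sqrt_sq_add_mul_sq μ hσ hc])
    (by positivity)

theorem neg_add_sqrt_div_sq_pos (μ : ℝ) {σ c : ℝ} (hσ : σ ≠ 0) (hc : 0 < c) :
    0 < (-μ + Real.sqrt (μ ^ 2 + 2 * σ ^ 2 * c)) / σ ^ 2 :=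
  div_pos (by linarith [le_abs_self μ, abs_lt_sqrt_sq_add_mul_sq μ hσ hc]) (by positivity)

theorem Dden_pos {α β : ℝ} (hα : α < 0) (hβ : 0 < β) (x : ℝ) : 0 < Dden α β x := by
  have := Real.exp_pos (-β * x)
  unfold Dden
  nlinarith [mul_pos hβ (Real.exp_pos (-α * x))]

theorem hasDerivAt_Dden (α β x : ℝ) :
    HasDerivAt (Dden α β) (α * β * (Real.exp (-β * x) - Real.exp (-α * x))) x := by
  have := ((((hasDerivAt_id x).const_mul (-α)).exp).const_mul β).sub
    ((((hasDerivAt_id x).const_mul (-β)).exp).const_mul α)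
  exact this.congr_deriv (by simp only [id]; ring)

theorem hasDerivAt_Nnum (α β x : ℝ) : HasDerivAt (Nnum α β) (-(α * β) * Dden α β x) x := by
  have := ((((hasDerivAt_id x).const_mul (-α)).exp).const_mul (β ^ 2)).sub
    ((((hasDerivAt_id x).const_mul (-β)).exp).const_mul (α ^ 2))
  exact this.congr_deriv (by simp only [Dden, id]; ring)

theorem hasDerivAt_Nnum_div_Dden {α β : ℝ} (hα : α < 0) (hβ : 0 < β) (x : ℝ) :
    HasDerivAt (fun y => Nnum α β y / Dden α β y)
      (-(α * β) * (α - β) ^ 2 * Real.exp (-α * x) * Real.exp (-β * x) / Dden α β x ^ 2) x := by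
  have hD := (Dden_pos hα hβ x).ne'
  refine ((hasDerivAt_Nnum α β x).div (hasDerivAt_Dden α β x) hD).congr_deriv ?_
  rw [div_left_inj' (pow_ne_zero 2 hD)]
  simp only [Dden, Nnum]
  ring

theorem exists_hasDerivAt_Gfun_pos {l1 l2 l3 l4 ρ : ℝ} (h1 : l1 < 0) (h2 : 0 < l2) (h3 : l3 < 0)
    (h4 : 0 < l4) (hρ0 : 0 < ρ) (hρ1 : ρ < 1) (x : ℝ) :
    ∃ g, HasDerivAt (Gfun l1 l2 l3 l4 ρ) g x ∧ 0 < g := by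
  refine ⟨_, ((hasDerivAt_Nnum_div_Dden h1 h2 x).const_mul ρ).add
    ((hasDerivAt_Nnum_div_Dden h3 h4 x).const_mul (1 - ρ)), ?_⟩
  have := Dden_pos h1 h2 x
  have := Dden_pos h3 h4 x
  have : 0 < -(l1 * l2) := by nlinarith
  have : 0 < -(l3 * l4) := by nlinarith
  have : 0 < 1 - ρ := by linarith
  have : 0 < (l1 - l2) ^ 2 := by nlinarith
  have : 0 < (l3 - l4) ^ 2 := by nlinarith
  positivity

theorem Gfun_strictMono {l1 l2 l3 l4 ρ : ℝ} (h1 : l1 < 0) (h2 : 0 < l2) (h3 : l3 < 0)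
    (h4 : 0 < l4) (hρ0 : 0 < ρ) (hρ1 : ρ < 1) : StrictMono (Gfun l1 l2 l3 l4 ρ) := by
  choose g hg hg_pos using exists_hasDerivAt_Gfun_pos h1 h2 h3 h4 hρ0 hρ1
  exact strictMono_of_hasDerivAt_pos hg hg_pos

theorem exists_hasDerivAt_Dden_mul_Dden_mul_Gfun_pos {l1 l2 l3 l4 ρ x : ℝ} (h1 : l1 < 0)
    (h2 : 0 < l2) (h3 : l3 < 0) (h4 : 0 < l4) (hρ0 : 0 < ρ) (hρ1 : ρ < 1)
    (hx : Gfun l1 l2 l3 l4 ρ x = 0) :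
    ∃ ψ, HasDerivAt (fun v => Dden l1 l2 v * Dden l3 l4 v * Gfun l1 l2 l3 l4 ρ v) ψ x ∧ 0 < ψ := by
  obtain ⟨g, hg, hg_pos⟩ := exists_hasDerivAt_Gfun_pos h1 h2 h3 h4 hρ0 hρ1 x
  refine ⟨Dden l1 l2 x * Dden l3 l4 x * g, ?_, by
    have := Dden_pos h1 h2 x; have := Dden_pos h3 h4 x; positivity⟩
  exact (((hasDerivAt_Dden l1 l2 x).mul (hasDerivAt_Dden l3 l4 x)).mul hg).congr_deriv
    (by rw [hx, Pi.mul_apply]; ring)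

theorem R1_mul_X22_sub_R2_mul_X12 {l1 l2 l3 l4 : ℝ} (h1 : l1 < 0) (h2 : 0 < l2) (h3 : l3 < 0)
    (h4 : 0 < l4) (ρ q m x : ℝ) :
    R1 l1 l2 ρ q m x * X22 l3 l4 m x - R2 l3 l4 ρ q m x * X12 l1 l2 m x =
      q * Real.exp (-q * m) *
        (Dden l1 l2 (x - m) * Dden l3 l4 (x - m) * Gfun l1 l2 l3 l4 ρ (x - m)) := by
  have hD₁ := (Dden_pos h1 h2 (x - m)).ne'
  have hD₂ := (Dden_pos h3 h4 (x - m)).ne'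
  have hG : Dden l1 l2 (x - m) * Dden l3 l4 (x - m) * Gfun l1 l2 l3 l4 ρ (x - m) =
      ρ * Nnum l1 l2 (x - m) * Dden l3 l4 (x - m) +
        (1 - ρ) * Nnum l3 l4 (x - m) * Dden l1 l2 (x - m) := by
    simp only [Gfun]
    field_simp
  have hflip : ∀ l, l * (m - x) = -l * (x - m) := fun l => by ring
  rw [hG]
  simp only [R1, R2, X12, X22, Nnum, Dden, hflip]
  ring

theorem X11_mul_X22_sub_X21_mul_X12_mul_eq {l1 l2 l3 l4 ρ q m x y F F' : ℝ} (h1 : l1 < 0)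
    (h2 : 0 < l2) (h3 : l3 < 0) (h4 : 0 < l4)
    (hode1 : X11 l1 l2 ρ q m x F * y + X12 l1 l2 m x * F' = R1 l1 l2 ρ q m x)
    (hode2 : X21 l3 l4 ρ q m x F * y + X22 l3 l4 m x * F' = R2 l3 l4 ρ q m x) :
    (X11 l1 l2 ρ q m x F * X22 l3 l4 m x - X21 l3 l4 ρ q m x F * X12 l1 l2 m x) * y =
      q * Real.exp (-q * m) *
        (Dden l1 l2 (x - m) * Dden l3 l4 (x - m) * Gfun l1 l2 l3 l4 ρ (x - m)) := by
  rw [← R1_mul_X22_sub_R2_mul_X12 h1 h2 h3 h4]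
  linear_combination X22 l3 l4 m x * hode1 - X12 l1 l2 m x * hode2

theorem differentiableWithinAt_X11_mul_X22_sub_X21_mul_X12 {l1 l2 l3 l4 ρ q x : ℝ} {s : Set ℝ}
    {b F : ℝ → ℝ} (hb : DifferentiableWithinAt ℝ b s x) (hF : DifferentiableWithinAt ℝ F s x) :
    DifferentiableWithinAt ℝ (fun m => X11 l1 l2 ρ q m (b m) (F m) * X22 l3 l4 m (b m) -
      X21 l3 l4 ρ q m (b m) (F m) * X12 l1 l2 m (b m)) s x := by
  have he : ∀ c, DifferentiableWithinAt ℝ (fun m => Real.exp (c * (m - b m))) s x :=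
    fun c => ((differentiableWithinAt_id.sub hb).const_mul c).exp
  have hexp : DifferentiableWithinAt ℝ (fun m => Real.exp (-q * m)) s x :=
    (differentiableWithinAt_id.const_mul (-q)).exp
  have h11 : DifferentiableWithinAt ℝ (fun m => X11 l1 l2 ρ q m (b m) (F m)) s x :=
    (((hexp.const_mul ρ).mul (((he l2).const_mul l1).sub ((he l1).const_mul l2))).add
      (((he l1).sub (he l2)).mul hF)).const_mul (l1 * l2)
  have h21 : DifferentiableWithinAt ℝ (fun m => X21 l3 l4 ρ q m (b m) (F m)) s x :=
    (((hexp.const_mul (1 - ρ)).mul (((he l4).const_mul l3).sub ((he l3).const_mul l4))).sub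
      (((he l3).sub (he l4)).mul hF)).const_mul (l3 * l4)
  have h12 : DifferentiableWithinAt ℝ (fun m => X12 l1 l2 m (b m)) s x :=
    ((he l2).const_mul l1).sub ((he l1).const_mul l2)
  have h22 : DifferentiableWithinAt ℝ (fun m => X22 l3 l4 m (b m)) s x :=
    ((he l3).const_mul l4).sub ((he l4).const_mul l3)
  exact (h11.mul h22).sub (h21.mul h12)

theorem stmt13_general (μ σ δ γ ρ q mbar l1 l2 l3 l4 : ℝ)
    (hσ : 0 < σ) (hδ : 0 < δ) (hγ : 0 < γ)
    (hρ : ρ ∈ Set.Ioo (0:ℝ) 1) (hq : 0 < q) (hmbar : 0 < mbar)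
    (hl1 : l1 = (-μ - Real.sqrt (μ ^ 2 + 2 * σ ^ 2 * δ)) / σ ^ 2)
    (hl2 : l2 = (-μ + Real.sqrt (μ ^ 2 + 2 * σ ^ 2 * δ)) / σ ^ 2)
    (hl3 : l3 = (-μ - Real.sqrt (μ ^ 2 + 2 * σ ^ 2 * (δ + γ))) / σ ^ 2)
    (hl4 : l4 = (-μ + Real.sqrt (μ ^ 2 + 2 * σ ^ 2 * (δ + γ))) / σ ^ 2)
    (b F b' F' b'' : ℝ → ℝ)
    (hbd : ∀ m ∈ Set.Icc (0:ℝ) mbar,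
      HasDerivWithinAt b (b' m) (Set.Icc (0:ℝ) mbar) m)
    (hFd : ∀ m ∈ Set.Icc (0:ℝ) mbar,
      HasDerivWithinAt F (F' m) (Set.Icc (0:ℝ) mbar) m)
    (hbd2 : ∀ m ∈ Set.Icc (0:ℝ) mbar,
      HasDerivWithinAt b' (b'' m) (Set.Icc (0:ℝ) mbar) m)
    (hb2c : ContinuousOn b'' (Set.Icc (0:ℝ) mbar))
    (hode1 : ∀ m ∈ Set.Icc (0:ℝ) mbar,
      X11 l1 l2 ρ q m (b m) (F m) * b' m + X12 l1 l2 m (b m) * F' m =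
        R1 l1 l2 ρ q m (b m))
    (hode2 : ∀ m ∈ Set.Icc (0:ℝ) mbar,
      X21 l3 l4 ρ q m (b m) (F m) * b' m + X22 l3 l4 m (b m) * F' m =
        R2 l3 l4 ρ q m (b m))
    (hG0 : Gfun l1 l2 l3 l4 ρ (b 0) = 0)
    (hdet : ∀ m ∈ Set.Icc (0:ℝ) mbar,
      0 < X11 l1 l2 ρ q m (b m) (F m) * X22 l3 l4 m (b m) -
          X21 l3 l4 ρ q m (b m) (F m) * X12 l1 l2 m (b m)) :
    b' 0 = 0 ∧
    (∃ ε : ℝ, 0 < ε ∧ ε ≤ mbar ∧ ∀ m ∈ Set.Ico (0:ℝ) ε, b'' m < 0) ∧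
    (∀ m ∈ Set.Icc (0:ℝ) mbar, b' m ≤ 0) := by
  obtain ⟨hρ0, hρ1⟩ := hρ
  have h1 : l1 < 0 := hl1 ▸ neg_sub_sqrt_div_sq_neg μ hσ.ne' hδ
  have h2 : 0 < l2 := hl2 ▸ neg_add_sqrt_div_sq_pos μ hσ.ne' hδ
  have h3 : l3 < 0 := hl3 ▸ neg_sub_sqrt_div_sq_neg μ hσ.ne' (add_pos hδ hγ)
  have h4 : 0 < l4 := hl4 ▸ neg_add_sqrt_div_sq_pos μ hσ.ne' (add_pos hδ hγ)
  have h0 : (0:ℝ) ∈ Icc 0 mbar := left_mem_Icc.2 hmbar.le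
  have hcramer := fun m hm =>
    X11_mul_X22_sub_X21_mul_X12_mul_eq h1 h2 h3 h4 (hode1 m hm) (hode2 m hm)
  have hsign : ∀ m ∈ Icc 0 mbar,
      SignType.sign (b' m) = SignType.sign (Gfun l1 l2 l3 l4 ρ (b m - m)) := fun m hm => by
    simpa [sign_mul, sign_pos (hdet m hm), sign_pos hq, sign_pos (Real.exp_pos _),
      sign_pos (Dden_pos h1 h2 _), sign_pos (Dden_pos h3 h4 _)] using
      congrArg SignType.sign (hcramer m hm)
  have hb'0 : b' 0 = 0 := by simpa [hG0] using hsign 0 h0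
  have hbelow := image_le_add_mul_sub_of_deriv_lt (C := 1) hbd fun m hm hbm => by
    have : b' m = 0 := by
      simpa [show b m - m = b 0 by linarith, hG0] using hsign m (Ico_subset_Icc_self hm)
    linarith
  obtain ⟨ψ, hΨ, hψ⟩ := exists_hasDerivAt_Dden_mul_Dden_mul_Gfun_pos h1 h2 h3 h4 hρ0 hρ1
    ((sub_zero (b 0)).symm ▸ hG0)
  have hb''0 : b'' 0 < 0 := deriv_neg_of_mul_eq_comp_sub_id (uniqueDiffOn_Icc hmbar 0 h0) h0
    (differentiableWithinAt_X11_mul_X22_sub_X21_mul_X12 (hbd 0 h0).differentiableWithinAt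
      (hFd 0 h0).differentiableWithinAt)
    ((differentiableWithinAt_id.const_mul (-q)).exp.const_mul q) (hbd 0 h0) (hbd2 0 h0) hΨ
    hcramer hb'0 (by rw [sub_zero, hG0, mul_zero]) (hdet 0 h0) (by positivity) hψ
  refine ⟨hb'0, exists_forall_Ico_neg_of_continuousWithinAt hmbar (hb2c 0 h0) hb''0,
    fun m hm => ?_⟩
  rw [← sign_nonpos_iff, hsign m hm, sign_nonpos_iff, ← hG0]
  exact (Gfun_strictMono h1 h2 h3 h4 hρ0 hρ1).monotone (by linarith [hbelow m hm])

/-- Monotonicity and local concavity of the free dividend boundary `b`: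
`b'(0) = 0`, `b'' < 0` near `0`, and `b' ≤ 0` on `[0, m̄]`. -/
theorem stmt13 (μ σ δ γ ρ q mbar l1 l2 l3 l4 : ℝ)
    (hμ : 0 < μ) (hσ : 0 < σ) (hδ : 0 < δ) (hγ : 0 < γ)
    (hρ : ρ ∈ Set.Ioo (0:ℝ) 1) (hq : 0 < q) (hmbar : 0 < mbar)
    (hl1 : l1 = (-μ - Real.sqrt (μ ^ 2 + 2 * σ ^ 2 * δ)) / σ ^ 2)
    (hl2 : l2 = (-μ + Real.sqrt (μ ^ 2 + 2 * σ ^ 2 * δ)) / σ ^ 2)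
    (hl3 : l3 = (-μ - Real.sqrt (μ ^ 2 + 2 * σ ^ 2 * (δ + γ))) / σ ^ 2)
    (hl4 : l4 = (-μ + Real.sqrt (μ ^ 2 + 2 * σ ^ 2 * (δ + γ))) / σ ^ 2)
    (b F b' F' b'' F'' : ℝ → ℝ)
    (hbd : ∀ m ∈ Set.Icc (0:ℝ) mbar,
      HasDerivWithinAt b (b' m) (Set.Icc (0:ℝ) mbar) m)
    (hFd : ∀ m ∈ Set.Icc (0:ℝ) mbar,
      HasDerivWithinAt F (F' m) (Set.Icc (0:ℝ) mbar) m)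
    (hbd2 : ∀ m ∈ Set.Icc (0:ℝ) mbar,
      HasDerivWithinAt b' (b'' m) (Set.Icc (0:ℝ) mbar) m)
    (hFd2 : ∀ m ∈ Set.Icc (0:ℝ) mbar,
      HasDerivWithinAt F' (F'' m) (Set.Icc (0:ℝ) mbar) m)
    (hb2c : ContinuousOn b'' (Set.Icc (0:ℝ) mbar))
    (hF2c : ContinuousOn F'' (Set.Icc (0:ℝ) mbar))
    (hode1 : ∀ m ∈ Set.Icc (0:ℝ) mbar,
      X11 l1 l2 ρ q m (b m) (F m) * b' m + X12 l1 l2 m (b m) * F' m =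
        R1 l1 l2 ρ q m (b m))
    (hode2 : ∀ m ∈ Set.Icc (0:ℝ) mbar,
      X21 l3 l4 ρ q m (b m) (F m) * b' m + X22 l3 l4 m (b m) * F' m =
        R2 l3 l4 ρ q m (b m))
    (hG0 : Gfun l1 l2 l3 l4 ρ (b 0) = 0)
    (hF0 : F 0 = ρ * Nnum l1 l2 (b 0) / Dden l1 l2 (b 0))
    (hdet : ∀ m ∈ Set.Icc (0:ℝ) mbar,
      0 < X11 l1 l2 ρ q m (b m) (F m) * X22 l3 l4 m (b m) -
          X21 l3 l4 ρ q m (b m) (F m) * X12 l1 l2 m (b m)) :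
    b' 0 = 0 ∧
    (∃ ε : ℝ, 0 < ε ∧ ε ≤ mbar ∧ ∀ m ∈ Set.Ico (0:ℝ) ε, b'' m < 0) ∧
    (∀ m ∈ Set.Icc (0:ℝ) mbar, b' m ≤ 0) :=
  stmt13_general μ σ δ γ ρ q mbar l1 l2 l3 l4 hσ hδ hγ hρ hq hmbar hl1 hl2 hl3 hl4 b F b' F' b'' hbd
    hFd hbd2 hb2c hode1 hode2 hG0 hdet
end

section
/- Let λ₁ < 0 < λ₂, λ₄ > 0 and ρ ∈ (0,1), q > 0, and let A₁, A₂, A₄, b, m be reals with A₂ ≥ 0. Suppose the smooth-fit system holds with A₃ = 0, i.e., λ₁A₁e^{λ₁b} + λ₂A₂e^{λ₂b} = ρe^{−qm}, λ₄A₄e^{λ₄b} = (1−ρ)e^{−qm}, and λ₁²A₁e^{λ₁b} + λ₂²A₂e^{λ₂b} + λ₄²A₄e^{λ₄b} = 0. Then ρλ₁ + (1−ρ)λ₄ ≤ 0. -/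
/-- The contradiction step: if the smooth-fit system holds with `A₃ = 0` and
`A₂ ≥ 0`, then `ρλ₁ + (1−ρ)λ₄ ≤ 0`. -/
theorem stmt16 (l1 l2 l4 ρ q A1 A2 A4 b m : ℝ)
    (h10 : l1 < 0) (h02 : (0:ℝ) < l2) (h4 : 0 < l4)
    (hρ : ρ ∈ Set.Ioo (0:ℝ) 1) (hq : 0 < q) (hA2 : 0 ≤ A2)
    (hfit1 : l1 * A1 * Real.exp (l1 * b) + l2 * A2 * Real.exp (l2 * b) =
      ρ * Real.exp (-q * m))
    (hfit2 : l4 * A4 * Real.exp (l4 * b) = (1 - ρ) * Real.exp (-q * m))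
    (hfit3 : l1 ^ 2 * A1 * Real.exp (l1 * b) + l2 ^ 2 * A2 * Real.exp (l2 * b) +
      l4 ^ 2 * A4 * Real.exp (l4 * b) = 0) :
    ρ * l1 + (1 - ρ) * l4 ≤ 0 := by
  have hE : 0 < Real.exp (-q * m) := Real.exp_pos _
  have h2b : 0 < Real.exp (l2 * b) := Real.exp_pos _
  have key : (ρ * l1 + (1 - ρ) * l4) * Real.exp (-q * m) =
      -(l2 * (l2 - l1) * A2 * Real.exp (l2 * b)) := by
    linear_combination hfit3 - l1 * hfit1 - l4 * hfit2
  have hnn : 0 ≤ l2 * (l2 - l1) * A2 * Real.exp (l2 * b) :=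
    mul_nonneg (mul_nonneg (mul_nonneg h02.le (by linarith)) hA2) h2b.le
  nlinarith [key, hE, hnn]
end

section
/- Let λ₃ < λ₁ < 0 < λ₂ < λ₄ be reals, ρ ∈ (0,1), q > 0, ρλ₁ + (1−ρ)λ₄ > 0, and m̄ > 0. Suppose A₁, A₂, A₃, A₄, b : [0, m̄] → ℝ are continuous functions such that for every m ∈ [0, m̄] the smooth-fit system holds at (m, b(m)): λ₁A₁(m)e^{λ₁b(m)} + λ₂A₂(m)e^{λ₂b(m)} = ρe^{−qm}, λ₃A₃(m)e^{λ₃b(m)} + λ₄A₄(m)e^{λ₄b(m)} = (1−ρ)e^{−qm}, and Σᵢ₌₁⁴ λᵢ²Aᵢ(m)e^{λᵢb(m)} = 0, and suppose A₂(m) ≥ 0 for all m ∈ [0, m̄] and A₃(0) < 0. Then A₃(m) < 0 for every m ∈ [0, m̄]. -/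
/-- Negativity of `A₃` along the free boundary: if the smooth-fit system holds
continuously on `[0, m̄]` with `A₂ ≥ 0`, `A₃(0) < 0`, and the parameter
condition `ρλ₁ + (1−ρ)λ₄ > 0`, then `A₃ < 0` on all of `[0, m̄]`. -/
theorem stmt17 (l1 l2 l3 l4 ρ q mbar : ℝ)
    (h31 : l3 < l1) (h10 : l1 < 0) (h02 : (0:ℝ) < l2) (h24 : l2 < l4)
    (hρ : ρ ∈ Set.Ioo (0:ℝ) 1) (hq : 0 < q)
    (hpar : 0 < ρ * l1 + (1 - ρ) * l4) (hmbar : 0 < mbar)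
    (A1 A2 A3 A4 b : ℝ → ℝ)
    (hA1c : ContinuousOn A1 (Set.Icc (0:ℝ) mbar))
    (hA2c : ContinuousOn A2 (Set.Icc (0:ℝ) mbar))
    (hA3c : ContinuousOn A3 (Set.Icc (0:ℝ) mbar))
    (hA4c : ContinuousOn A4 (Set.Icc (0:ℝ) mbar))
    (hbc : ContinuousOn b (Set.Icc (0:ℝ) mbar))
    (hfit1 : ∀ m ∈ Set.Icc (0:ℝ) mbar,
      l1 * A1 m * Real.exp (l1 * b m) + l2 * A2 m * Real.exp (l2 * b m) =
        ρ * Real.exp (-q * m))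
    (hfit2 : ∀ m ∈ Set.Icc (0:ℝ) mbar,
      l3 * A3 m * Real.exp (l3 * b m) + l4 * A4 m * Real.exp (l4 * b m) =
        (1 - ρ) * Real.exp (-q * m))
    (hfit3 : ∀ m ∈ Set.Icc (0:ℝ) mbar,
      l1 ^ 2 * A1 m * Real.exp (l1 * b m) + l2 ^ 2 * A2 m * Real.exp (l2 * b m) +
        l3 ^ 2 * A3 m * Real.exp (l3 * b m) +
        l4 ^ 2 * A4 m * Real.exp (l4 * b m) = 0)
    (hA2 : ∀ m ∈ Set.Icc (0:ℝ) mbar, 0 ≤ A2 m)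
    (hA30 : A3 0 < 0) :
    ∀ m ∈ Set.Icc (0:ℝ) mbar, A3 m < 0 := by
  have hne : ∀ m ∈ Set.Icc (0:ℝ) mbar, A3 m ≠ 0 := by
    intro m hm h0
    have hE : 0 < Real.exp (-q * m) := Real.exp_pos _
    have he2 : 0 < Real.exp (l2 * b m) := Real.exp_pos _
    have f1 := hfit1 m hm
    have f2 := hfit2 m hm
    have f3 := hfit3 m hm
    rw [h0] at f2 f3
    have key : l2 * (l1 - l2) * (A2 m) * Real.exp (l2 * b m)
        = (ρ * l1 + (1 - ρ) * l4) * Real.exp (-q * m) := by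
      linear_combination l1 * f1 - f3 + l4 * f2
    have h1 : 0 < (ρ * l1 + (1 - ρ) * l4) * Real.exp (-q * m) :=
      mul_pos hpar hE
    nlinarith [mul_nonneg (hA2 m hm) he2.le, mul_pos h02 (sub_pos.mpr (h10.trans h02))]
  intro m hm
  rcases lt_or_ge (A3 m) 0 with h | h
  · exact h
  · exfalso
    have hsub : Set.Icc (0:ℝ) m ⊆ Set.Icc (0:ℝ) mbar :=
      Set.Icc_subset_Icc le_rfl hm.2
    have : (0:ℝ) ∈ Set.Icc (A3 0) (A3 m) := ⟨hA30.le, h⟩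
    obtain ⟨c, hc, hc0⟩ := intermediate_value_Icc hm.1 (hA3c.mono hsub) this
    exact hne c (hsub hc) hc0
end

section
/- Let λ₃ < λ₁ < 0 < λ₂ < λ₄ be reals, let A₁, A₂, A₃, A₄ ∈ ℝ satisfy A₂ ≥ 0, A₃ ≤ 0, A₄ ≥ 0 (A₁ of arbitrary sign), and let b ∈ ℝ satisfy λ₁²A₁e^{λ₁b} + λ₂²A₂e^{λ₂b} + λ₃²A₃e^{λ₃b} + λ₄²A₄e^{λ₄b} = 0. Then for every x ≤ b: Σᵢ₌₁⁴ λᵢ²Aᵢe^{λᵢx} ≤ 0, and Σᵢ₌₁⁴ λᵢAᵢe^{λᵢx} ≥ Σᵢ₌₁⁴ λᵢAᵢe^{λᵢb}. -/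
/-!
Writing `f x = Σᵢ λᵢ²Aᵢ e^{λᵢx}`, the sign conditions make every term of
`e^{-λ₁x} f x = λ₁²A₁ + Σ_{i≠1} λᵢ²Aᵢ e^{(λᵢ-λ₁)x}` nondecreasing in `x`. Since `f b = 0`, this
forces `f ≤ 0` on `(-∞, b]`, and `f` is the derivative of `Σᵢ λᵢAᵢ e^{λᵢx}`, which is therefore
antitone there.
-/

open Real Finset

section ExpSum

variable {ι : Type*} (s : Finset ι) (c μ : ι → ℝ)

noncomputable def expSum (x : ℝ) : ℝ := ∑ i ∈ s, c i * exp (μ i * x)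

theorem hasDerivAt_expSum (x : ℝ) :
    HasDerivAt (expSum s c μ) (expSum s (fun i => μ i * c i) μ x) x := by
  have hterm : ∀ i ∈ s, HasDerivAt (fun y => c i * exp (μ i * y))
      (μ i * c i * exp (μ i * x)) x := fun i _ =>
    (((hasDerivAt_id' x).const_mul (μ i)).exp.const_mul (c i)).congr_deriv (by ring)
  exact HasDerivAt.fun_sum hterm

theorem continuous_expSum : Continuous (expSum s c μ) :=
  continuous_iff_continuousAt.2 fun x => (hasDerivAt_expSum s c μ x).continuousAt

theorem exp_neg_mul_mul_expSum (ν x : ℝ) :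
    exp (-ν * x) * expSum s c μ x = expSum s c (fun i => μ i - ν) x := by
  simp only [expSum, Finset.mul_sum]
  refine Finset.sum_congr rfl fun i _ => ?_
  rw [mul_left_comm, ← exp_add]
  congr 2
  ring

theorem monotone_expSum (h : ∀ i ∈ s, 0 ≤ μ i * c i) : Monotone (expSum s c μ) :=
  monotone_of_hasDerivAt_nonneg (hasDerivAt_expSum s c μ) fun _ =>
    Finset.sum_nonneg fun i hi => mul_nonneg (h i hi) (exp_pos _).le

theorem expSum_nonpos_of_le {ν b x : ℝ} (h : ∀ i ∈ s, 0 ≤ (μ i - ν) * c i)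
    (hb : expSum s c μ b = 0) (hx : x ≤ b) : expSum s c μ x ≤ 0 := by
  have hmono := monotone_expSum s c (fun i => μ i - ν) h hx
  rw [← exp_neg_mul_mul_expSum, ← exp_neg_mul_mul_expSum, hb, mul_zero] at hmono
  exact nonpos_of_mul_nonpos_right hmono (exp_pos _)

theorem antitoneOn_expSum_Iic {b : ℝ} (h : ∀ x ≤ b, expSum s (fun i => μ i * c i) μ x ≤ 0) :
    AntitoneOn (expSum s c μ) (Set.Iic b) := by
  refine antitoneOn_of_hasDerivWithinAt_nonpos (convex_Iic b)
    (continuous_expSum s c μ).continuousOn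
    (fun x _ => (hasDerivAt_expSum s c μ x).hasDerivWithinAt) fun x hx => h x ?_
  rw [interior_Iic] at hx
  exact hx.le

end ExpSum

/-- The variational inequality in the waiting region: if the second-order
smooth-fit condition `Σᵢ λᵢ²Aᵢe^{λᵢb} = 0` holds with `A₂, A₄ ≥ 0`, `A₃ ≤ 0`,
then for every `x ≤ b` one has `Σᵢ λᵢ²Aᵢe^{λᵢx} ≤ 0` and
`Σᵢ λᵢAᵢe^{λᵢx} ≥ Σᵢ λᵢAᵢe^{λᵢb}`. -/
theorem stmt18 (l1 l2 l3 l4 A1 A2 A3 A4 b : ℝ)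
    (h31 : l3 < l1) (h10 : l1 < 0) (h02 : (0:ℝ) < l2) (h24 : l2 < l4)
    (hA2 : 0 ≤ A2) (hA3 : A3 ≤ 0) (hA4 : 0 ≤ A4)
    (hfit : l1 ^ 2 * A1 * Real.exp (l1 * b) + l2 ^ 2 * A2 * Real.exp (l2 * b) +
      l3 ^ 2 * A3 * Real.exp (l3 * b) + l4 ^ 2 * A4 * Real.exp (l4 * b) = 0) :
    ∀ x : ℝ, x ≤ b →
      (l1 ^ 2 * A1 * Real.exp (l1 * x) + l2 ^ 2 * A2 * Real.exp (l2 * x) +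
        l3 ^ 2 * A3 * Real.exp (l3 * x) + l4 ^ 2 * A4 * Real.exp (l4 * x) ≤ 0) ∧
      (l1 * A1 * Real.exp (l1 * b) + l2 * A2 * Real.exp (l2 * b) +
          l3 * A3 * Real.exp (l3 * b) + l4 * A4 * Real.exp (l4 * b) ≤
        l1 * A1 * Real.exp (l1 * x) + l2 * A2 * Real.exp (l2 * x) +
          l3 * A3 * Real.exp (l3 * x) + l4 * A4 * Real.exp (l4 * x)) := by
  set μ : Fin 4 → ℝ := ![l1, l2, l3, l4]
  set c : Fin 4 → ℝ := fun i => μ i * ![A1, A2, A3, A4] i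
  have hU : ∀ y, expSum univ c μ y = l1 * A1 * exp (l1 * y) + l2 * A2 * exp (l2 * y) +
      l3 * A3 * exp (l3 * y) + l4 * A4 * exp (l4 * y) := fun y => by
    simp [expSum, Fin.sum_univ_four, c, μ]
  have hU' : ∀ y, expSum univ (fun i => μ i * c i) μ y = l1 ^ 2 * A1 * exp (l1 * y) +
      l2 ^ 2 * A2 * exp (l2 * y) + l3 ^ 2 * A3 * exp (l3 * y) + l4 ^ 2 * A4 * exp (l4 * y) :=
    fun y => by
      simp only [expSum, Fin.sum_univ_four, Fin.isValue, Matrix.cons_val_zero, Matrix.cons_val_one,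
        Matrix.cons_val, μ, c]
      ring
  have hsign : ∀ i ∈ univ, 0 ≤ (μ i - l1) * (μ i * c i) := fun i _ => by
    fin_cases i <;> simp [c, μ]
    · nlinarith [mul_nonneg (mul_self_nonneg l2) hA2]
    · nlinarith [mul_nonpos_of_nonneg_of_nonpos (mul_self_nonneg l3) hA3]
    · nlinarith [mul_nonneg (mul_self_nonneg l4) hA4]
  have hU'_nonpos : ∀ x ≤ b, expSum univ (fun i => μ i * c i) μ x ≤ 0 := fun x hx =>
    expSum_nonpos_of_le univ _ μ hsign (by rw [hU']; exact hfit) hx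
  intro x hx
  refine ⟨hU' x ▸ hU'_nonpos x hx, ?_⟩
  rw [← hU, ← hU]
  exact antitoneOn_expSum_Iic univ c μ hU'_nonpos hx Set.self_mem_Iic hx
end
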